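/- arXiv:1910.03920 — 3 statements merged into one kernel-verified Lean document; each statement's English description precedes it below -/
import Mathlib

section
/- Let (X,d,μ) be a metric measure space, 0<s<1, 0<p<∞ and 0<q≤∞. Let φ : X → ℝ be an L-Lipschitz function supported in a bounded measurable set F⊂X of finite measure. Then φ ∈ M^s_{p,q}(X) and ‖φ‖_{M^s_{p,q}(X)} ≤ C·(1+‖φ‖_∞)·(1+L^s)·μ(F)^{1/p}, where the constant C depends only on s and q. -/
open MeasureTheory Metric Set Filter ENNReal

/-- The `γ`-median of `u` over `A` w.r.t. `μ`. -/
noncomputable def med {X : Type*} [MeasurableSpace X] (μ : Measure X) (γ : ℝ)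
    (u : X → ℝ) (A : Set X) : ℝ :=
  sSup {M : ℝ | μ {x ∈ A | u x < M} ≤ ENNReal.ofReal γ * μ A}

/-- `(g k)_{k ∈ ℤ}` is a fractional `s`-gradient of `u` in `S`. -/
def IsFracGradient {X : Type*} [MetricSpace X] [MeasurableSpace X] (μ : Measure X)
    (s : ℝ) (u : X → ℝ) (S : Set X) (g : ℤ → X → ℝ) : Prop :=
  (∀ k, Measurable (g k)) ∧ (∀ k x, 0 ≤ g k x) ∧
  ∃ E : Set X, E ⊆ S ∧ μ E = 0 ∧ ∀ k : ℤ, ∀ x ∈ S \ E, ∀ y ∈ S \ E,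
    (2:ℝ) ^ (k - 1) ≤ dist x y → dist x y < (2:ℝ) ^ k →
    |u x - u y| ≤ dist x y ^ s * (g k x + g k y)

/-- The `ℓ^q` norm of a sequence indexed by `ℤ`. -/
noncomputable def lqNormE (q : ℝ≥0∞) (f : ℤ → ℝ) : ℝ≥0∞ :=
  if q = ∞ then ⨆ k, ENNReal.ofReal |f k|
  else (∑' k, ENNReal.ofReal |f k| ^ q.toReal) ^ (1 / q.toReal)

/-- The `L^p(S, ℓ^q)` norm of a sequence of functions (w.r.t. the measure `μ`). -/
noncomputable def lpLqNorm {X : Type*} [MeasurableSpace X] (μ : Measure X)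
    (p q : ℝ≥0∞) (g : ℤ → X → ℝ) : ℝ≥0∞ :=
  if p = ∞ then essSup (fun x => lqNormE q fun k => g k x) μ
  else (∫⁻ x, (lqNormE q fun k => g k x) ^ p.toReal ∂μ) ^ (1 / p.toReal)

/-- The Hajłasz–Triebel–Lizorkin (quasi)norm of `u` on `S`. -/
noncomputable def tlNorm {X : Type*} [MetricSpace X] [MeasurableSpace X] (μ : Measure X)
    (s : ℝ) (p q : ℝ≥0∞) (S : Set X) (u : X → ℝ) : ℝ≥0∞ :=
  eLpNorm u p (μ.restrict S) +
    ⨅ (g : ℤ → X → ℝ) (_ : IsFracGradient μ s u S g), lpLqNorm (μ.restrict S) p q g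

/-- Membership in the Hajłasz–Triebel–Lizorkin space `M^s_{p,q}(S)`. -/
def MemTL {X : Type*} [MetricSpace X] [MeasurableSpace X] (μ : Measure X)
    (s : ℝ) (p q : ℝ≥0∞) (S : Set X) (u : X → ℝ) : Prop :=
  MemLp u p (μ.restrict S) ∧ tlNorm μ s p q S u < ∞

/-- The Triebel–Lizorkin capacity of `E ⊆ X`. -/
noncomputable def tlCapacity {X : Type*} [MetricSpace X] [MeasurableSpace X] (μ : Measure X)
    (s : ℝ) (p q : ℝ≥0∞) (E : Set X) : ℝ≥0∞ :=
  ⨅ (u : X → ℝ) (_ : MemTL μ s p q univ u)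
    (_ : ∃ U : Set X, IsOpen U ∧ E ⊆ U ∧ ∀ x ∈ U, 1 ≤ u x),
    tlNorm μ s p q univ u ^ p.toReal

/-- `μ` is a doubling measure: balls have positive finite measure and a doubling constant exists. -/
def IsDoubling {X : Type*} [MetricSpace X] [MeasurableSpace X] (μ : Measure X) : Prop :=
  (∀ (x : X) (r : ℝ), 0 < r → 0 < μ (ball x r) ∧ μ (ball x r) < ∞) ∧
  ∃ c : ℝ≥0∞, 1 ≤ c ∧ c < ∞ ∧ ∀ (x : X) (r : ℝ), 0 < r → μ (ball x (2*r)) ≤ c * μ (ball x r)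

/-- Generalized Hausdorff measure with a gauge assigning weight `h x r` to the ball `B(x,r)`. -/
noncomputable def hMeasureBall {X : Type*} [MetricSpace X] (h : X → ℝ → ℝ≥0∞) (E : Set X) : ℝ≥0∞ :=
  ⨆ (δ : ℝ) (_ : 0 < δ), ⨅ (c : ℕ → X) (r : ℕ → ℝ)
    (_ : E ⊆ ⋃ i, ball (c i) (r i)) (_ : ∀ i, 0 < r i ∧ r i ≤ δ),
    ∑' i, h (c i) (r i)

/-- Generalized Hausdorff measure with radius gauge `h`. -/
noncomputable def hMeasure {X : Type*} [MetricSpace X] (h : ℝ → ℝ≥0∞) (E : Set X) : ℝ≥0∞ :=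
  hMeasureBall (fun _ r => h r) E

/-!
Split the distance `d = d(x,y)` into dyadic annuli `2^(k-1) ≤ d < 2^k`. There the Lipschitz bound
gives `|φ x - φ y| ≤ L d = d^s · L d^(1-s) ≤ d^s · L 2^(k(1-s))`, and the sup bound gives
`|φ x - φ y| ≤ 2M = d^s · 2M d^(-s) ≤ d^s · 2M 2^(-(k-1)s)`, with `M = sup |φ|`. The minimum `a_k`
of the two constants, placed on the support of `φ`, is a fractional `s`-gradient. Since `0 < s < 1`,
`a_k` decays geometrically in `|k - k₀|` away from the crossover scale `2^k₀ ≈ M / L`, where it is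
at most `≈ L^s M^(1-s)`; hence `‖a‖_{ℓ^q} ≲ L^s (1 + M)` and integrating over `F` gives `μ(F)^(1/p)`.
-/

lemma lqNormE_zero {q : ℝ≥0∞} (hq : q ≠ 0) : lqNormE q (fun _ => 0) = 0 := by
  unfold lqNormE
  split_ifs with h
  · simp
  · have hq' : 0 < q.toReal := ENNReal.toReal_pos hq h
    simp [ENNReal.zero_rpow_of_pos hq', hq']

lemma lqNormE_mono {q : ℝ≥0∞} {a b : ℤ → ℝ} (h : ∀ k, |a k| ≤ |b k|) :
    lqNormE q a ≤ lqNormE q b := by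
  unfold lqNormE
  split_ifs
  · exact iSup_mono fun k => ENNReal.ofReal_le_ofReal (h k)
  · exact ENNReal.rpow_le_rpow (ENNReal.tsum_le_tsum fun k =>
      ENNReal.rpow_le_rpow (ENNReal.ofReal_le_ofReal (h k)) ENNReal.toReal_nonneg) (by positivity)

lemma lqNormE_const_mul {q : ℝ≥0∞} (hq : q ≠ 0) (c : ℝ) (a : ℤ → ℝ) :
    lqNormE q (fun k => c * a k) = ENNReal.ofReal |c| * lqNormE q a := by
  unfold lqNormE
  simp only [abs_mul, ENNReal.ofReal_mul (abs_nonneg c)]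
  split_ifs with h
  · exact (ENNReal.mul_iSup _ _).symm
  · have hq' : 0 < q.toReal := ENNReal.toReal_pos hq h
    simp_rw [ENNReal.mul_rpow_of_nonneg _ _ hq'.le, ENNReal.tsum_mul_left,
      ENNReal.mul_rpow_of_nonneg _ _ (by positivity : 0 ≤ 1 / q.toReal), ← ENNReal.rpow_mul,
      mul_one_div_cancel hq'.ne', ENNReal.rpow_one]

lemma lqNormE_comp_sub (q : ℝ≥0∞) (a : ℤ → ℝ) (j : ℤ) :
    lqNormE q (fun k => a (k - j)) = lqNormE q a := by
  unfold lqNormE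
  split_ifs
  · exact (Equiv.subRight j).iSup_comp (g := fun k => ENNReal.ofReal |a k|)
  · congr 1
    exact (Equiv.subRight j).tsum_eq (fun k => ENNReal.ofReal |a k| ^ q.toReal)

lemma lqNormE_pow_natAbs_lt_top {q : ℝ≥0∞} (hq : q ≠ 0) {r : ℝ} (hr0 : 0 ≤ r) (hr1 : r < 1) :
    lqNormE q (fun k => r ^ k.natAbs) < ∞ := by
  unfold lqNormE
  split_ifs with h
  · refine lt_of_le_of_lt (iSup_le fun k => ENNReal.ofReal_le_one.2 ?_) one_lt_top
    rw [abs_of_nonneg (by positivity)]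
    exact pow_le_one₀ hr0 hr1.le
  · have hq' : 0 < q.toReal := ENNReal.toReal_pos hq h
    have hρ : r ^ q.toReal < 1 := Real.rpow_lt_one hr0 hr1 hq'
    have hgeom : Summable fun n : ℕ => (r ^ q.toReal) ^ n :=
      summable_geometric_of_lt_one (by positivity) hρ
    have hsum : Summable fun k : ℤ => (r ^ q.toReal) ^ k.natAbs :=
      Summable.of_nat_of_neg (by simpa using hgeom) (by simpa using hgeom)
    have hterm : ∀ k : ℤ, ENNReal.ofReal |r ^ k.natAbs| ^ q.toReal
        = ENNReal.ofReal ((r ^ q.toReal) ^ k.natAbs) := fun k => by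
      rw [abs_of_nonneg (by positivity), ENNReal.ofReal_rpow_of_nonneg (by positivity) hq'.le,
        ← Real.rpow_natCast, ← Real.rpow_natCast, ← Real.rpow_mul hr0, ← Real.rpow_mul hr0,
        mul_comm]
    simp_rw [hterm, ← ENNReal.ofReal_tsum_of_nonneg (fun k => by positivity) hsum]
    exact ENNReal.rpow_lt_top_of_nonneg (by positivity) ofReal_ne_top

lemma Real.rpow_le_one_add {x e : ℝ} (hx : 0 ≤ x) (he0 : 0 ≤ e) (he1 : e ≤ 1) : x ^ e ≤ 1 + x := by
  rcases le_total x 1 with h | h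
  · linarith [Real.rpow_le_one hx h he0]
  · linarith [Real.rpow_le_self_of_one_le h he1]

section GradSeq

variable {s L M : ℝ}

noncomputable def lipschitzGradSeq (s L M : ℝ) (k : ℤ) : ℝ :=
  min (L * ((2 : ℝ) ^ k) ^ (1 - s)) (2 * M * ((2 : ℝ) ^ (k - 1)) ^ (-s))

lemma lipschitzGradSeq_nonneg (hL : 0 ≤ L) (hM : 0 ≤ M) (k : ℤ) :
    0 ≤ lipschitzGradSeq s L M k :=
  le_min (by positivity) (by positivity)

lemma abs_sub_le_rpow_mul_lipschitzGradSeq (hs0 : 0 ≤ s) (hs1 : s ≤ 1) {u v d : ℝ}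
    (hu : |u| ≤ M) (hv : |v| ≤ M) (huv : |u - v| ≤ L * d) (hL : 0 ≤ L) {k : ℤ}
    (hd1 : (2 : ℝ) ^ (k - 1) ≤ d) (hd2 : d < (2 : ℝ) ^ k) :
    |u - v| ≤ d ^ s * lipschitzGradSeq s L M k := by
  have hd : 0 < d := lt_of_lt_of_le (by positivity) hd1
  rw [lipschitzGradSeq, mul_min_of_nonneg _ _ (by positivity), le_min_iff]
  constructor
  · calc |u - v| ≤ L * d := huv
      _ = d ^ s * (L * d ^ (1 - s)) := by
        rw [mul_left_comm, ← Real.rpow_add hd, add_sub_cancel, Real.rpow_one]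
      _ ≤ d ^ s * (L * ((2 : ℝ) ^ k) ^ (1 - s)) := by gcongr
  · calc |u - v| ≤ |u| + |v| := abs_sub _ _
      _ ≤ 2 * M := by linarith
      _ = d ^ s * (2 * M * d ^ (-s)) := by
        rw [mul_left_comm, ← Real.rpow_add hd, add_neg_cancel, Real.rpow_zero, mul_one]
      _ ≤ d ^ s * (2 * M * ((2 : ℝ) ^ (k - 1)) ^ (-s)) := by
        refine mul_le_mul_of_nonneg_left (mul_le_mul_of_nonneg_left ?_ ?_) (by positivity)
        · exact Real.rpow_le_rpow_of_nonpos (by positivity) hd1 (by linarith)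
        · linarith [abs_nonneg u]

lemma min_rpow_two_zpow_le (n : ℤ) :
    min (((2 : ℝ) ^ n) ^ (1 - s)) (((2 : ℝ) ^ n) ^ (-s))
      ≤ ((2 : ℝ) ^ (-min s (1 - s))) ^ n.natAbs := by
  simp only [← Real.rpow_intCast, ← Real.rpow_natCast, ← Real.rpow_mul zero_le_two,
    Nat.cast_natAbs]
  have hs := min_le_left s (1 - s)
  have hs' := min_le_right s (1 - s)
  rcases le_total n 0 with hn | hn
  · refine (min_le_left _ _).trans (Real.rpow_le_rpow_of_exponent_le one_le_two ?_)
    rw [abs_of_nonpos hn]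
    push_cast
    nlinarith [(by exact_mod_cast hn : (n : ℝ) ≤ 0)]
  · refine (min_le_right _ _).trans (Real.rpow_le_rpow_of_exponent_le one_le_two ?_)
    rw [abs_of_nonneg hn]
    nlinarith [(by exact_mod_cast hn : (0 : ℝ) ≤ n)]

lemma min_mul_rpow_le_mul_min_rpow_div {t t₀ β : ℝ} (ht : 0 < t) (ht₀ : 0 < t₀)
    (hL : 0 ≤ L) (hβ : β ≤ 2 * L * t₀) :
    min (L * t ^ (1 - s)) (β * t ^ (-s))
      ≤ 2 * (L * t₀ ^ (1 - s)) * min ((t / t₀) ^ (1 - s)) ((t / t₀) ^ (-s)) := by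
  have h₁ : t₀ ^ (1 - s) * (t / t₀) ^ (1 - s) = t ^ (1 - s) := by
    rw [← Real.mul_rpow ht₀.le (by positivity), mul_div_cancel₀ _ ht₀.ne']
  have h₂ : t₀ ^ (1 - s) * (t / t₀) ^ (-s) = t₀ * t ^ (-s) := by
    rw [Real.div_rpow ht.le ht₀.le, Real.rpow_neg ht.le, Real.rpow_neg ht₀.le,
      Real.rpow_sub ht₀, Real.rpow_one]
    field_simp
  rw [mul_min_of_nonneg _ _ (by positivity)]
  refine min_le_min ?_ ?_
  · nlinarith [Real.rpow_nonneg ht.le (1 - s)]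
  · nlinarith [Real.rpow_nonneg ht.le (-s)]

lemma mul_rpow_one_sub_le_of_mul_le (hs0 : 0 ≤ s) (hs1 : s ≤ 1) {t : ℝ} (ht : 0 ≤ t)
    (hL : 0 ≤ L) (hM : 0 ≤ M) (h : L * t ≤ 4 * M) : L * t ^ (1 - s) ≤ 4 * (L ^ s * (1 + M)) := by
  rcases hL.eq_or_lt with rfl | hL
  · simp only [zero_mul]
    positivity
  calc L * t ^ (1 - s) = L ^ s * (L * t) ^ (1 - s) := by
        rw [Real.mul_rpow hL.le ht, ← mul_assoc, ← Real.rpow_add hL, add_sub_cancel,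
          Real.rpow_one]
    _ ≤ L ^ s * (1 + 4 * M) := by
        gcongr
        exact (Real.rpow_le_rpow (by positivity) h (by linarith)).trans
          (Real.rpow_le_one_add (by positivity) (by linarith) (by linarith))
    _ ≤ 4 * (L ^ s * (1 + M)) := by nlinarith [Real.rpow_nonneg hL.le s]

lemma two_zpow_sub_one_rpow_neg_le (hs1 : s ≤ 1) (k : ℤ) :
    ((2 : ℝ) ^ (k - 1)) ^ (-s) ≤ 2 * ((2 : ℝ) ^ k) ^ (-s) := by
  rw [zpow_sub_one₀ two_ne_zero, Real.mul_rpow (by positivity) (by positivity),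
    Real.inv_rpow zero_le_two, Real.rpow_neg zero_le_two, inv_inv, mul_comm]
  gcongr
  exact Real.rpow_le_self_of_one_le one_le_two hs1

lemma lipschitzGradSeq_le_geometric (hs0 : 0 < s) (hs1 : s < 1) (hL : 0 ≤ L) (hM : 0 ≤ M) :
    ∃ k₀ : ℤ, ∀ k, lipschitzGradSeq s L M k
      ≤ 8 * (L ^ s * (1 + M)) * ((2 : ℝ) ^ (-min s (1 - s))) ^ (k - k₀).natAbs := by
  rcases hL.eq_or_lt with rfl | hL
  · refine ⟨0, fun k => (min_le_left _ _).trans ?_⟩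
    simp [Real.zero_rpow hs0.ne']
  rcases hM.eq_or_lt with rfl | hM
  · refine ⟨0, fun k => (min_le_right _ _).trans ?_⟩
    simp only [mul_zero, zero_mul]
    positivity
  -- `k₀` is the crossover scale, where `L 2^k₀ ≈ 4M`
  obtain ⟨k₀, hk₀⟩ := exists_mem_Ico_zpow (div_pos (by positivity : 0 < 4 * M) hL) one_lt_two
  set t₀ := (2 : ℝ) ^ k₀
  have hlow : L * t₀ ≤ 4 * M := by
    have := (le_div_iff₀ hL).1 hk₀.1
    linarith
  have hhigh : 4 * M ≤ 2 * L * t₀ := by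
    have := (div_lt_iff₀ hL).1 hk₀.2
    rw [zpow_add_one₀ two_ne_zero] at this
    linarith
  have hpeak := mul_rpow_one_sub_le_of_mul_le hs0.le hs1.le (by positivity) hL.le hM.le hlow
  refine ⟨k₀, fun k => ?_⟩
  calc lipschitzGradSeq s L M k
      ≤ min (L * ((2 : ℝ) ^ k) ^ (1 - s)) (4 * M * ((2 : ℝ) ^ k) ^ (-s)) := by
        refine min_le_min le_rfl ?_
        have := two_zpow_sub_one_rpow_neg_le hs1.le k
        nlinarith
    _ ≤ 2 * (L * t₀ ^ (1 - s)) * min (((2 : ℝ) ^ (k - k₀)) ^ (1 - s))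
          (((2 : ℝ) ^ (k - k₀)) ^ (-s)) := by
        rw [zpow_sub₀ two_ne_zero]
        exact min_mul_rpow_le_mul_min_rpow_div (by positivity) (by positivity) hL.le hhigh
    _ ≤ 2 * (4 * (L ^ s * (1 + M))) * ((2 : ℝ) ^ (-min s (1 - s))) ^ (k - k₀).natAbs := by
        gcongr
        exact min_rpow_two_zpow_le (k - k₀)
    _ = 8 * (L ^ s * (1 + M)) * ((2 : ℝ) ^ (-min s (1 - s))) ^ (k - k₀).natAbs := by ring

lemma lqNormE_lipschitzGradSeq_le {q : ℝ≥0∞} (hq : q ≠ 0) (hs0 : 0 < s) (hs1 : s < 1)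
    (hL : 0 ≤ L) (hM : 0 ≤ M) :
    lqNormE q (lipschitzGradSeq s L M) ≤
      8 * lqNormE q (fun k => ((2 : ℝ) ^ (-min s (1 - s))) ^ k.natAbs) *
        (1 + ENNReal.ofReal M) * (1 + ENNReal.ofReal (L ^ s)) := by
  obtain ⟨k₀, hk₀⟩ := lipschitzGradSeq_le_geometric hs0 hs1 hL hM
  set K := lqNormE q (fun k => ((2 : ℝ) ^ (-min s (1 - s))) ^ k.natAbs)
  have hD : 0 ≤ 8 * (L ^ s * (1 + M)) := by positivity
  calc lqNormE q (lipschitzGradSeq s L M)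
      ≤ lqNormE q (fun k => 8 * (L ^ s * (1 + M)) *
          ((2 : ℝ) ^ (-min s (1 - s))) ^ (k - k₀).natAbs) := by
        refine lqNormE_mono fun k => ?_
        rw [abs_of_nonneg (lipschitzGradSeq_nonneg hL hM k), abs_of_nonneg (by positivity)]
        exact hk₀ k
    _ = ENNReal.ofReal (8 * (L ^ s * (1 + M))) * K := by
        rw [lqNormE_const_mul hq, abs_of_nonneg hD,
          lqNormE_comp_sub q (fun k => ((2 : ℝ) ^ (-min s (1 - s))) ^ k.natAbs)]
    _ = 8 * K * (1 + ENNReal.ofReal M) * ENNReal.ofReal (L ^ s) := by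
        rw [ENNReal.ofReal_mul (by norm_num), ENNReal.ofReal_mul (by positivity),
          ENNReal.ofReal_add zero_le_one hM, ENNReal.ofReal_one, ENNReal.ofReal_ofNat]
        ring
    _ ≤ 8 * K * (1 + ENNReal.ofReal M) * (1 + ENNReal.ofReal (L ^ s)) := by
        gcongr
        exact le_add_self

end GradSeq

lemma LipschitzWith.bddAbove_range_abs_of_isBounded_tsupport {α : Type*} [PseudoMetricSpace α]
    {K : NNReal} {f : α → ℝ} (hf : LipschitzWith K f) (hsupp : Bornology.IsBounded (tsupport f)) :
    BddAbove (range fun x => |f x|) := by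
  obtain ⟨C, hC⟩ := isBounded_iff_forall_norm_le.1
    ((hf.isBounded_image hsupp).union (Bornology.isBounded_singleton (x := 0)))
  refine ⟨C, ?_⟩
  rintro _ ⟨x, rfl⟩
  by_cases hx : x ∈ tsupport f
  · exact hC _ (Or.inl (mem_image_of_mem f hx))
  · simpa [image_eq_zero_of_notMem_tsupport hx] using hC 0 (Or.inr rfl)

lemma eLpNorm_le_ofReal_mul_measure_rpow_of_support_subset {α E : Type*} [MeasurableSpace α]
    [NormedAddCommGroup E] {μ : Measure α} {p : ℝ≥0∞} {f : α → E} {F : Set α} {C : ℝ}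
    (hF : MeasurableSet F) (hf : Function.support f ⊆ F) (hC : ∀ x, ‖f x‖ ≤ C) :
    eLpNorm f p μ ≤ ENNReal.ofReal C * μ F ^ (1 / p.toReal) := by
  rw [← indicator_eq_self.2 hf, eLpNorm_indicator_eq_eLpNorm_restrict hF, one_div, mul_comm]
  simpa using eLpNorm_le_of_ae_bound (μ := μ.restrict F) (p := p) (ae_of_all _ hC)

section FracGradient

variable {X : Type*} [MeasurableSpace X] {μ : Measure X}

lemma lpLqNorm_indicator_const {p q : ℝ≥0∞} (hp0 : p ≠ 0) (hp : p ≠ ∞) (hq : q ≠ 0)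
    {T : Set X} (hT : MeasurableSet T) (a : ℤ → ℝ) :
    lpLqNorm μ p q (fun k => T.indicator fun _ => a k) = lqNormE q a * μ T ^ (1 / p.toReal) := by
  have hp' : 0 < p.toReal := ENNReal.toReal_pos hp0 hp
  have hpt : ∀ x, (lqNormE q fun k => T.indicator (fun _ => a k) x) ^ p.toReal
      = T.indicator (fun _ => lqNormE q a ^ p.toReal) x := fun x => by
    by_cases hx : x ∈ T
    · simp [indicator_of_mem hx]
    · simp [indicator_of_notMem hx, lqNormE_zero hq, ENNReal.zero_rpow_of_pos hp']
  rw [lpLqNorm, if_neg hp, lintegral_congr hpt, lintegral_indicator_const hT,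
    ENNReal.mul_rpow_of_nonneg _ _ (by positivity), ← ENNReal.rpow_mul,
    mul_one_div_cancel hp'.ne', ENNReal.rpow_one]

variable [MetricSpace X]

lemma isFracGradient_indicator {s : ℝ} {u : X → ℝ} {T : Set X} (hT : MeasurableSet T)
    (hu : ∀ x ∉ T, u x = 0) {a : ℤ → ℝ} (ha : ∀ k, 0 ≤ a k)
    (h : ∀ k x y, (2 : ℝ) ^ (k - 1) ≤ dist x y → dist x y < (2 : ℝ) ^ k →
      |u x - u y| ≤ dist x y ^ s * a k) :
    IsFracGradient μ s u univ (fun k => T.indicator fun _ => a k) := by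
  refine ⟨fun k => measurable_const.indicator hT, fun k => indicator_nonneg fun _ _ => ha k,
    ∅, empty_subset _, measure_empty, fun k x _ y _ h₁ h₂ => ?_⟩
  by_cases hxy : x ∈ T ∨ y ∈ T
  · refine (h k x y h₁ h₂).trans (mul_le_mul_of_nonneg_left ?_ (by positivity))
    have hx := indicator_nonneg (fun _ _ => ha k) x (s := T)
    have hy := indicator_nonneg (fun _ _ => ha k) y (s := T)
    dsimp only
    rcases hxy with hxT | hyT
    · rw [indicator_of_mem hxT]; linarith
    · rw [indicator_of_mem hyT]; linarith
  · rw [not_or] at hxy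
    simp [hu x hxy.1, hu y hxy.2, indicator_of_notMem hxy.1, indicator_of_notMem hxy.2]

lemma tlNorm_univ_le {s : ℝ} {p q : ℝ≥0∞} {u : X → ℝ} {g : ℤ → X → ℝ}
    (hg : IsFracGradient μ s u univ g) :
    tlNorm μ s p q univ u ≤ eLpNorm u p μ + lpLqNorm μ p q g := by
  rw [tlNorm, Measure.restrict_univ]
  gcongr
  exact iInf₂_le g hg

end FracGradient

/-- an `L`-Lipschitz function supported in a bounded set `F` of finite measure
belongs to `M^s_{p,q}(X)` with `‖φ‖_{M^s_{p,q}(X)} ≤ C (1+‖φ‖_∞)(1+L^s) μ(F)^{1/p}`, where `C`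
depends only on `s` and `q`. -/
theorem lipschitz_memTL (s : ℝ) (q : ℝ≥0∞) (hs0 : 0 < s) (hs1 : s < 1) (hq0 : 0 < q) :
    ∃ C : ℝ≥0∞, 0 < C ∧ C < ∞ ∧
      ∀ (X : Type) [MetricSpace X] [MeasurableSpace X] [BorelSpace X] (μ : Measure X)
        (p : ℝ≥0∞), 0 < p → p ≠ ∞ →
      ∀ (F : Set X), MeasurableSet F → Bornology.IsBounded F → μ F < ∞ →
      ∀ (φ : X → ℝ) (L : ℝ), 0 ≤ L → (∀ x y : X, |φ x - φ y| ≤ L * dist x y) →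
        tsupport φ ⊆ F →
      MemTL μ s p q univ φ ∧
      tlNorm μ s p q univ φ ≤
        C * (1 + ENNReal.ofReal (⨆ x, |φ x|)) * (1 + ENNReal.ofReal (L ^ s)) *
          μ F ^ (1 / p.toReal) := by
  set K := lqNormE q (fun k => ((2 : ℝ) ^ (-min s (1 - s))) ^ k.natAbs)
  have hK : K < ∞ := lqNormE_pow_natAbs_lt_top hq0.ne' (by positivity)
    (Real.rpow_lt_one_of_one_lt_of_neg one_lt_two (by simp [hs0, hs1]))
  refine ⟨1 + 8 * K, by positivity, by finiteness, ?_⟩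
  intro X _ _ _ μ p hp0 hp F hF hFb hFμ φ L hL hLip hsupp
  have hφ : LipschitzWith L.toNNReal φ :=
    LipschitzWith.of_dist_le' fun x y => by simpa only [Real.dist_eq] using hLip x y
  set M := ⨆ x, |φ x|
  have hφM : ∀ x, |φ x| ≤ M :=
    le_ciSup (hφ.bddAbove_range_abs_of_isBounded_tsupport (hFb.subset hsupp))
  have hM : 0 ≤ M := Real.iSup_nonneg fun x => abs_nonneg _
  have hg := isFracGradient_indicator (μ := μ) (isClosed_tsupport φ).measurableSet
    (fun x => image_eq_zero_of_notMem_tsupport) (lipschitzGradSeq_nonneg hL hM)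
    fun k x y h₁ h₂ => abs_sub_le_rpow_mul_lipschitzGradSeq hs0.le hs1.le (hφM x) (hφM y)
      (hLip x y) hL h₁ h₂
  have hφp : eLpNorm φ p μ ≤ ENNReal.ofReal M * μ F ^ (1 / p.toReal) :=
    eLpNorm_le_ofReal_mul_measure_rpow_of_support_subset hF ((subset_tsupport φ).trans hsupp) hφM
  have hgp := lpLqNorm_indicator_const (μ := μ) hp0.ne' hp hq0.ne'
    (isClosed_tsupport φ).measurableSet (lipschitzGradSeq s L M)
  have htl : tlNorm μ s p q univ φ ≤ (1 + 8 * K) * (1 + ENNReal.ofReal M) *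
      (1 + ENNReal.ofReal (L ^ s)) * μ F ^ (1 / p.toReal) := by
    refine (tlNorm_univ_le hg).trans ?_
    rw [hgp, add_mul, add_mul, add_mul, one_mul]
    refine add_le_add (hφp.trans ?_) ?_
    · gcongr
      exact le_add_self.trans (le_mul_of_one_le_right' le_self_add)
    gcongr
    exact lqNormE_lipschitzGradSeq_le hq0.ne' hs0 hs1 hL hM
  refine ⟨⟨?_, htl.trans_lt (by finiteness)⟩, htl⟩
  rw [Measure.restrict_univ]
  exact ⟨hφ.continuous.aestronglyMeasurable, hφp.trans_lt (by finiteness)⟩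
end

section
/- Let (X,d,μ) be a doubling metric measure space, 0<s<1, 0<p<∞ and 0<q≤∞. Then for any E⊂X there exists a constant C such that cap_{M^s_{p,q}}(E)^θ ≤ C·ℋ^h(E), where θ = min{1, q/p} and the gauge is h(B(x,ρ)) = (μ(B(x,ρ))/ρ^{sp})^θ; that is, ℋ^h(E) is computed using coverings by balls B(x_i,r_i) with r_i ≤ δ and weight (μ(B(x_i,r_i))/r_i^{sp})^θ attached to each ball. -/
open MeasureTheory Metric Set Filter ENNReal

/-!
Cover `E` by balls `B(cᵢ, rᵢ)` with `rᵢ ≤ 1` and let `u = supᵢ φᵢ`, where the tent `φᵢ` equals `1` on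
`B(cᵢ, rᵢ)`, vanishes off `B(cᵢ, 2rᵢ)` and is `1/rᵢ`-Lipschitz. Writing `m_k(r) = min(2^{(1-k)s},
2^{k(1-s)}/r)`, so that `min(1, d/r) ≤ d^s m_k(r)` whenever `2^{k-1} ≤ d < 2^k`, the sequence
`g_k = supᵢ m_k(rᵢ) 1_{B(cᵢ, 2rᵢ)}` is a fractional `s`-gradient of `u`. Splitting at `2^k ≈ r` gives two
geometric series, `∑_k m_k(r)^w ≲ r^{-sw}`. With `w = pθ ≤ min(p, q)`, the `ℓ^q` norm is dominated by
the `ℓ^w` norm, and Minkowski's inequality in `L^{1/θ}` yields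
`‖g‖_{L^p(ℓ^q)}^w ≲ ∑ᵢ rᵢ^{-sw} μ(B(cᵢ, 2rᵢ))^θ`; doubling turns this into the Hausdorff sum
`∑ᵢ (μ(B(cᵢ, rᵢ)) / rᵢ^{sp})^θ`. The same bound holds for `‖u‖_p^w` because `θ ≤ 1` and `rᵢ ≤ 1`.
-/

namespace ENNReal

lemma iSup_rpow {ι : Sort*} (f : ι → ℝ≥0∞) {y : ℝ} (hy : 0 < y) :
    (⨆ i, f i) ^ y = ⨆ i, f i ^ y :=
  (orderIsoRpow y hy).map_iSup f

lemma rpow_tsum_le_tsum_rpow {ι : Type*} (f : ι → ℝ≥0∞) {θ : ℝ} (hθ0 : 0 < θ) (hθ1 : θ ≤ 1) :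
    (∑' i, f i) ^ θ ≤ ∑' i, f i ^ θ := by
  rw [ENNReal.tsum_eq_iSup_sum, iSup_rpow _ hθ0]
  refine iSup_le fun s => ?_
  calc (∑ i ∈ s, f i) ^ θ ≤ ∑ i ∈ s, f i ^ θ :=
        Finset.le_sum_of_subadditive (· ^ θ) (zero_rpow_of_pos hθ0).le
          (fun a b => rpow_add_le_add_rpow a b hθ0.le hθ1) s f
    _ ≤ ∑' i, f i ^ θ := ENNReal.sum_le_tsum s

lemma tsum_rpow_rpow_one_div_le {ι : Type*} (f : ι → ℝ≥0∞) {w t : ℝ} (hw : 0 < w)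
    (hwt : w ≤ t) : (∑' i, f i ^ t) ^ (1 / t) ≤ (∑' i, f i ^ w) ^ (1 / w) := by
  have ht : 0 < t := hw.trans_le hwt
  have key : (∑' i, f i ^ t) ^ (w / t) ≤ ∑' i, f i ^ w := by
    refine (rpow_tsum_le_tsum_rpow _ (div_pos hw ht) ((div_le_one ht).2 hwt)).trans_eq ?_
    simp_rw [← rpow_mul, mul_div_cancel₀ w ht.ne']
  calc (∑' i, f i ^ t) ^ (1 / t) = ((∑' i, f i ^ t) ^ (w / t)) ^ (1 / w) := by
        rw [← rpow_mul]; congr 1; field_simp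
    _ ≤ (∑' i, f i ^ w) ^ (1 / w) := by gcongr

lemma iSup_le_tsum_rpow_rpow_one_div {ι : Type*} (f : ι → ℝ≥0∞) {w : ℝ} (hw : 0 < w) :
    ⨆ i, f i ≤ (∑' i, f i ^ w) ^ (1 / w) := by
  refine iSup_le fun i => ?_
  calc f i = (f i ^ w) ^ (1 / w) := by rw [← rpow_mul, mul_one_div_cancel hw.ne', rpow_one]
    _ ≤ (∑' i, f i ^ w) ^ (1 / w) := by gcongr; exact ENNReal.le_tsum i

lemma add_rpow_le_two_rpow_mul (a b : ℝ≥0∞) {w : ℝ} (hw : 0 ≤ w) :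
    (a + b) ^ w ≤ 2 ^ w * (a ^ w + b ^ w) := by
  calc (a + b) ^ w ≤ (2 * max a b) ^ w := by
        gcongr
        rw [two_mul]
        exact add_le_add (le_max_left _ _) (le_max_right _ _)
    _ = 2 ^ w * max a b ^ w := ENNReal.mul_rpow_of_nonneg _ _ hw
    _ ≤ 2 ^ w * (a ^ w + b ^ w) := by
        gcongr
        rcases le_total a b with h | h
        · rw [max_eq_right h]; exact le_add_self
        · rw [max_eq_left h]; exact le_self_add

lemma abs_toReal_sub_toReal_le {a b d : ℝ≥0∞} (ha : a ≠ ∞) (hb : b ≠ ∞) (hd : d ≠ ∞)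
    (hab : a ≤ b + d) (hba : b ≤ a + d) : |a.toReal - b.toReal| ≤ d.toReal := by
  have h1 := ENNReal.toReal_mono (ENNReal.add_ne_top.2 ⟨hb, hd⟩) hab
  have h2 := ENNReal.toReal_mono (ENNReal.add_ne_top.2 ⟨ha, hd⟩) hba
  rw [ENNReal.toReal_add hb hd] at h1
  rw [ENNReal.toReal_add ha hd] at h2
  exact abs_sub_le_iff.2 ⟨by linarith, by linarith⟩

lemma tsum_int_eq_tsum_add_tsum (f : ℤ → ℝ≥0∞) (k₀ : ℤ) :
    ∑' k, f k = ∑' n : ℕ, f (k₀ + 1 + n) + ∑' n : ℕ, f (k₀ - n) := by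
  rw [← (Equiv.addLeft (k₀ + 1)).tsum_eq, ← tsum_nat_add_neg_add_one ENNReal.summable,
    ENNReal.tsum_add]
  congr 2 with n
  simp only [Equiv.coe_addLeft]
  congr 1
  ring

lemma ofReal_mul_pow_rpow {a b w : ℝ} (ha : 0 ≤ a) (hb : 0 ≤ b) (hw : 0 ≤ w) (n : ℕ) :
    ENNReal.ofReal (a * b ^ n) ^ w = ENNReal.ofReal a ^ w * (ENNReal.ofReal b ^ w) ^ n := by
  rw [ENNReal.ofReal_mul ha, ENNReal.ofReal_pow hb, ENNReal.mul_rpow_of_nonneg _ _ hw,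
    ← ENNReal.rpow_natCast, ← ENNReal.rpow_natCast, ← ENNReal.rpow_mul, ← ENNReal.rpow_mul,
    mul_comm (n : ℝ)]

lemma div_ofReal_rpow_rpow_eq {r : ℝ} (hr : 0 < r) (m : ℝ≥0∞) (s p : ℝ) {θ : ℝ} (hθ : 0 ≤ θ) :
    (m / ENNReal.ofReal (r ^ (s * p))) ^ θ = ENNReal.ofReal (r ^ (-s)) ^ (p * θ) * m ^ θ := by
  rw [div_eq_mul_inv, ENNReal.mul_rpow_of_nonneg _ _ hθ, mul_comm,
    ← ENNReal.ofReal_inv_of_pos (by positivity), ENNReal.ofReal_rpow_of_pos (by positivity),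
    ENNReal.ofReal_rpow_of_pos (by positivity), ← Real.rpow_neg hr.le, ← Real.rpow_mul hr.le,
    ← Real.rpow_mul hr.le]
  ring_nf

end ENNReal

section Minkowski

variable {X : Type*} [MeasurableSpace X] (μ : Measure X)

lemma lintegral_finsetSum_rpow_le {ι : Type*} (s : Finset ι) {F : ι → X → ℝ≥0∞}
    (hF : ∀ i, Measurable (F i)) {t : ℝ} (ht : 1 ≤ t) :
    (∫⁻ x, (∑ i ∈ s, F i x) ^ t ∂μ) ^ (1 / t) ≤ ∑ i ∈ s, (∫⁻ x, F i x ^ t ∂μ) ^ (1 / t) := by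
  have ht0 : 0 < t := zero_lt_one.trans_le ht
  simpa only [Finset.sum_apply] using
    Finset.le_sum_of_subadditive_on_pred (fun G : X → ℝ≥0∞ => (∫⁻ x, G x ^ t ∂μ) ^ (1 / t))
      Measurable (by simp [zero_rpow_of_pos ht0, ht0])
      (fun G H hG hH => ENNReal.lintegral_Lp_add_le hG.aemeasurable hH.aemeasurable ht)
      (fun G H hG hH => hG.add hH) F (fun i _ => hF i)

lemma lintegral_tsum_rpow_le {F : ℕ → X → ℝ≥0∞} (hF : ∀ i, Measurable (F i)) {t : ℝ}
    (ht : 1 ≤ t) :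
    (∫⁻ x, (∑' i, F i x) ^ t ∂μ) ^ (1 / t) ≤ ∑' i, (∫⁻ x, F i x ^ t ∂μ) ^ (1 / t) := by
  have ht0 : 0 < t := zero_lt_one.trans_le ht
  have hmono : Monotone fun n x => (∑ i ∈ Finset.range n, F i x) ^ t :=
    fun m n hmn x =>
      rpow_le_rpow (Finset.sum_le_sum_of_subset (Finset.range_subset_range.2 hmn)) ht0.le
  simp_rw [ENNReal.tsum_eq_iSup_nat, iSup_rpow _ ht0]
  rw [lintegral_iSup (fun n => (Finset.measurable_sum _ fun i _ => hF i).pow_const t) hmono,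
    iSup_rpow _ (one_div_pos.2 ht0)]
  refine iSup_le fun n => (lintegral_finsetSum_rpow_le μ _ hF ht).trans ?_
  rw [← ENNReal.tsum_eq_iSup_nat]
  exact ENNReal.sum_le_tsum _

end Minkowski

lemma lqNormE_le_tsum_rpow {q : ℝ≥0∞} {w : ℝ} (hw : 0 < w) (hwq : q ≠ ∞ → w ≤ q.toReal)
    (f : ℤ → ℝ) : lqNormE q f ≤ (∑' k, ENNReal.ofReal |f k| ^ w) ^ (1 / w) := by
  unfold lqNormE
  split_ifs with hq
  · exact ENNReal.iSup_le_tsum_rpow_rpow_one_div _ hw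
  · exact ENNReal.tsum_rpow_rpow_one_div_le _ hw (hwq hq)

lemma lpLqNorm_rpow_le_tsum {X : Type*} [MeasurableSpace X] (μ : Measure X) {p q : ℝ≥0∞}
    (hp : p ≠ ∞) (hp0 : 0 < p.toReal) {θ : ℝ} (hθ0 : 0 < θ) (hθ1 : θ ≤ 1)
    (hθq : q ≠ ∞ → p.toReal * θ ≤ q.toReal) (g : ℤ → X → ℝ) {H : ℕ → X → ℝ≥0∞}
    (hH : ∀ i, Measurable (H i))
    (hgH : ∀ x, ∑' k, ENNReal.ofReal |g k x| ^ (p.toReal * θ) ≤ ∑' i, H i x) :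
    lpLqNorm μ p q g ^ (p.toReal * θ) ≤ ∑' i, (∫⁻ x, H i x ^ θ⁻¹ ∂μ) ^ θ := by
  have hw : 0 < p.toReal * θ := mul_pos hp0 hθ0
  have hN : ∀ x, (lqNormE q fun k => g k x) ^ p.toReal ≤ (∑' i, H i x) ^ θ⁻¹ := fun x =>
    calc (lqNormE q fun k => g k x) ^ p.toReal
        ≤ ((∑' k, ENNReal.ofReal |g k x| ^ (p.toReal * θ)) ^ (1 / (p.toReal * θ))) ^ p.toReal := by
          gcongr
          exact lqNormE_le_tsum_rpow hw hθq _
      _ = (∑' k, ENNReal.ofReal |g k x| ^ (p.toReal * θ)) ^ θ⁻¹ := by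
          rw [← ENNReal.rpow_mul]; congr 1; field_simp
      _ ≤ (∑' i, H i x) ^ θ⁻¹ := by gcongr; exact hgH x
  calc lpLqNorm μ p q g ^ (p.toReal * θ)
        = (∫⁻ x, (lqNormE q fun k => g k x) ^ p.toReal ∂μ) ^ θ := by
        rw [lpLqNorm, if_neg hp, ← ENNReal.rpow_mul]; congr 1; field_simp
    _ ≤ (∫⁻ x, (∑' i, H i x) ^ θ⁻¹ ∂μ) ^ θ := by gcongr; exact hN _
    _ ≤ ∑' i, (∫⁻ x, H i x ^ θ⁻¹ ∂μ) ^ θ := by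
        simpa only [one_div, inv_inv] using lintegral_tsum_rpow_le μ hH (one_le_inv₀ hθ0 |>.2 hθ1)

lemma tlCapacity_le_rpow_of_isFracGradient {X : Type*} [MetricSpace X] [MeasurableSpace X]
    (μ : Measure X) {s : ℝ} {p q : ℝ≥0∞} (hp : 0 < p.toReal) {E U : Set X} (hU : IsOpen U)
    (hEU : E ⊆ U) {u : X → ℝ} (hu : Measurable u) (hu1 : ∀ x ∈ U, 1 ≤ u x) {g : ℤ → X → ℝ}
    (hg : IsFracGradient μ s u univ g) :
    tlCapacity μ s p q E ≤ (eLpNorm u p μ + lpLqNorm μ p q g) ^ p.toReal := by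
  have hnorm : tlNorm μ s p q univ u ≤ eLpNorm u p μ + lpLqNorm μ p q g := by
    simp only [tlNorm, Measure.restrict_univ]
    gcongr
    exact iInf₂_le g hg
  by_cases hfin : eLpNorm u p μ + lpLqNorm μ p q g < ∞
  · have hmem : MemTL μ s p q univ u := by
      refine ⟨?_, hnorm.trans_lt hfin⟩
      rw [Measure.restrict_univ]
      exact ⟨hu.aestronglyMeasurable, le_self_add.trans_lt hfin⟩
    exact iInf₂_le_of_le u hmem (iInf_le_of_le ⟨U, hU, hEU, hu1⟩ (by gcongr))
  · rw [not_lt, top_le_iff] at hfin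
    rw [hfin, ENNReal.top_rpow_of_pos hp]
    exact le_top

section Bump

variable {X : Type*} [MetricSpace X]

noncomputable def bump (c : X) (r : ℝ) (x : X) : ℝ :=
  min 1 (max 0 (2 - dist x c / r))

variable {c : X} {r : ℝ}

lemma bump_nonneg (x : X) : 0 ≤ bump c r x := le_min zero_le_one (le_max_left _ _)

lemma bump_le_one (x : X) : bump c r x ≤ 1 := min_le_left _ _

lemma continuous_bump : Continuous (bump c r) :=
  continuous_const.min <| continuous_const.max <|
    continuous_const.sub ((continuous_id.dist continuous_const).div_const _)

lemma bump_eq_one (hr : 0 < r) {x : X} (hx : x ∈ ball c r) : bump c r x = 1 := by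
  have : dist x c / r < 1 := (div_lt_one hr).2 hx
  exact min_eq_left (le_max_of_le_right (by linarith))

lemma bump_eq_zero (hr : 0 < r) {x : X} (hx : x ∉ ball c (2 * r)) : bump c r x = 0 := by
  have : 2 ≤ dist x c / r := (le_div_iff₀ hr).2 (not_lt.1 hx)
  rw [bump, max_eq_left (by linarith), min_eq_right zero_le_one]

lemma abs_bump_sub_bump_le (hr : 0 < r) (x y : X) :
    |bump c r x - bump c r y| ≤ min 1 (dist x y / r) := by
  refine le_min ?_ ?_
  · rw [abs_sub_le_iff]
    constructor <;> linarith [bump_nonneg (c := c) (r := r) x, bump_le_one (c := c) (r := r) x,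
      bump_nonneg (c := c) (r := r) y, bump_le_one (c := c) (r := r) y]
  calc |bump c r x - bump c r y| ≤ |(2 - dist x c / r) - (2 - dist y c / r)| :=
        (abs_min_sub_min_le_max _ _ _ _).trans <| max_le (by simp) <|
          (abs_max_sub_max_le_max _ _ _ _).trans <| max_le (by simp) le_rfl
    _ = |dist x c - dist y c| / r := by
        rw [show (2 - dist x c / r) - (2 - dist y c / r) = -((dist x c - dist y c) / r) by ring,
          abs_neg, abs_div, abs_of_pos hr]
    _ ≤ dist x y / r := by gcongr; exact abs_dist_sub_le _ _ _

end Bump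

section GradWeight

noncomputable def gradWeight (s : ℝ) (k : ℤ) (r : ℝ) : ℝ :=
  min (((2 : ℝ) ^ (1 - k)) ^ s) (((2 : ℝ) ^ k) ^ (1 - s) / r)

variable {s r : ℝ}

lemma gradWeight_nonneg (k : ℤ) (hr : 0 ≤ r) : 0 ≤ gradWeight s k r :=
  le_min (by positivity) (by positivity)

lemma gradWeight_le (k : ℤ) : gradWeight s k r ≤ ((2 : ℝ) ^ (1 - k)) ^ s := min_le_left _ _

lemma min_one_div_le_rpow_mul_gradWeight (hs0 : 0 ≤ s) (hs1 : s ≤ 1) (hr : 0 < r) {k : ℤ}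
    {d : ℝ} (hd1 : (2 : ℝ) ^ (k - 1) ≤ d) (hd2 : d < (2 : ℝ) ^ k) :
    min 1 (d / r) ≤ d ^ s * gradWeight s k r := by
  have hd0 : 0 < d := (_root_.zpow_pos two_pos _).trans_le hd1
  rw [gradWeight, mul_min_of_nonneg _ _ (by positivity)]
  refine min_le_min ?_ ?_
  · rw [← Real.mul_rpow hd0.le (by positivity)]
    refine Real.one_le_rpow ?_ hs0
    calc (1 : ℝ) = (2 : ℝ) ^ (k - 1) * (2 : ℝ) ^ (1 - k) := by
          rw [← zpow_add₀ two_ne_zero]; norm_num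
      _ ≤ d * (2 : ℝ) ^ (1 - k) := by gcongr
  · rw [← mul_div_assoc]
    gcongr
    calc d = d ^ s * d ^ (1 - s) := by rw [← Real.rpow_add hd0]; norm_num
      _ ≤ d ^ s * ((2 : ℝ) ^ k) ^ (1 - s) := by gcongr

lemma gradWeight_add_le (hs0 : 0 ≤ s) (hr : 0 < r) {k₀ : ℤ} (hk₀ : r < (2 : ℝ) ^ (k₀ + 1))
    (n : ℕ) : gradWeight s (k₀ + 1 + n) r ≤ 2 ^ s * r ^ (-s) * ((2⁻¹ : ℝ) ^ s) ^ n := by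
  have h2 : (2 : ℝ) ^ (1 - (k₀ + 1 + n)) ≤ 2 * r⁻¹ * 2⁻¹ ^ n := by
    rw [show 1 - (k₀ + 1 + n) = 1 + (-(k₀ + 1)) + (-(n : ℤ)) by ring,
      zpow_add₀ two_ne_zero, zpow_add₀ two_ne_zero, zpow_one, zpow_neg, zpow_neg, zpow_natCast,
      ← inv_pow]
    gcongr
  calc gradWeight s (k₀ + 1 + n) r ≤ ((2 : ℝ) ^ (1 - (k₀ + 1 + n))) ^ s := gradWeight_le _
    _ ≤ (2 * r⁻¹ * 2⁻¹ ^ n) ^ s := by gcongr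
    _ = 2 ^ s * r ^ (-s) * ((2⁻¹ : ℝ) ^ s) ^ n := by
        rw [Real.mul_rpow (by positivity) (by positivity), Real.mul_rpow (by positivity)
          (by positivity), Real.inv_rpow hr.le, ← Real.rpow_neg hr.le, ← Real.rpow_natCast,
          ← Real.rpow_natCast, ← Real.rpow_mul (by positivity), ← Real.rpow_mul (by positivity),
          mul_comm s]

lemma gradWeight_sub_le (hs1 : s ≤ 1) (hr : 0 < r) {k₀ : ℤ} (hk₀ : (2 : ℝ) ^ k₀ ≤ r) (n : ℕ) :
    gradWeight s (k₀ - n) r ≤ r ^ (-s) * ((2⁻¹ : ℝ) ^ (1 - s)) ^ n := by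
  have h2 : (2 : ℝ) ^ (k₀ - n) ≤ r * 2⁻¹ ^ n := by
    rw [zpow_sub₀ two_ne_zero, zpow_natCast, div_eq_mul_inv, ← inv_pow]
    gcongr
  calc gradWeight s (k₀ - n) r ≤ ((2 : ℝ) ^ (k₀ - n)) ^ (1 - s) / r := min_le_right _ _
    _ ≤ (r * 2⁻¹ ^ n) ^ (1 - s) / r := by gcongr
    _ = r ^ (-s) * ((2⁻¹ : ℝ) ^ (1 - s)) ^ n := by
        rw [Real.mul_rpow hr.le (by positivity), Real.rpow_sub hr, Real.rpow_one,
          Real.rpow_neg hr.le, ← Real.rpow_natCast, ← Real.rpow_natCast,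
          ← Real.rpow_mul (by positivity), ← Real.rpow_mul (by positivity), mul_comm (1 - s)]
        field_simp

end GradWeight

noncomputable def gradConst (s w : ℝ) : ℝ≥0∞ :=
  ENNReal.ofReal (2 ^ s) ^ w * (1 - ENNReal.ofReal ((2⁻¹ : ℝ) ^ s) ^ w)⁻¹ +
    (1 - ENNReal.ofReal ((2⁻¹ : ℝ) ^ (1 - s)) ^ w)⁻¹

lemma ofReal_two_inv_rpow_rpow_lt_one {a w : ℝ} (ha : 0 < a) (hw : 0 < w) :
    ENNReal.ofReal ((2⁻¹ : ℝ) ^ a) ^ w < 1 :=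
  ENNReal.rpow_lt_one (ENNReal.ofReal_lt_one.2 (Real.rpow_lt_one (by norm_num) (by norm_num) ha))
    hw

lemma gradConst_lt_top {s w : ℝ} (hs0 : 0 < s) (hs1 : s < 1) (hw : 0 < w) :
    gradConst s w < ∞ := by
  have h1 := ofReal_two_inv_rpow_rpow_lt_one hs0 hw
  have h2 := ofReal_two_inv_rpow_rpow_lt_one (sub_pos.2 hs1) hw
  refine ENNReal.add_lt_top.2 ⟨ENNReal.mul_lt_top ?_ ?_, ?_⟩
  · exact ENNReal.rpow_lt_top_of_nonneg hw.le ENNReal.ofReal_ne_top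
  all_goals exact ENNReal.inv_lt_top.2 (tsub_pos_iff_lt.2 ‹_›)

lemma tsum_gradWeight_rpow_le {s w r : ℝ} (hs0 : 0 ≤ s) (hs1 : s ≤ 1) (hw : 0 < w) (hr : 0 < r) :
    ∑' k, ENNReal.ofReal (gradWeight s k r) ^ w ≤
      gradConst s w * ENNReal.ofReal (r ^ (-s)) ^ w := by
  set k₀ := Int.log 2 r
  have hk₀ : (2 : ℝ) ^ k₀ ≤ r := Int.zpow_log_le_self one_lt_two hr
  have hk₀' : r < (2 : ℝ) ^ (k₀ + 1) := Int.lt_zpow_succ_log_self one_lt_two r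
  have hupper : ∀ n : ℕ, ENNReal.ofReal (gradWeight s (k₀ + 1 + n) r) ^ w ≤
      ENNReal.ofReal (2 ^ s * r ^ (-s)) ^ w * (ENNReal.ofReal ((2⁻¹ : ℝ) ^ s) ^ w) ^ n := by
    intro n
    rw [← ENNReal.ofReal_mul_pow_rpow (by positivity) (by positivity) hw.le]
    gcongr
    exact gradWeight_add_le hs0 hr hk₀' n
  have hlower : ∀ n : ℕ, ENNReal.ofReal (gradWeight s (k₀ - n) r) ^ w ≤
      ENNReal.ofReal (r ^ (-s)) ^ w * (ENNReal.ofReal ((2⁻¹ : ℝ) ^ (1 - s)) ^ w) ^ n := by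
    intro n
    rw [← ENNReal.ofReal_mul_pow_rpow (by positivity) (by positivity) hw.le]
    gcongr
    exact gradWeight_sub_le hs1 hr hk₀ n
  rw [ENNReal.tsum_int_eq_tsum_add_tsum _ k₀]
  calc _ ≤ ∑' n : ℕ, ENNReal.ofReal (2 ^ s * r ^ (-s)) ^ w *
          (ENNReal.ofReal ((2⁻¹ : ℝ) ^ s) ^ w) ^ n +
        ∑' n : ℕ, ENNReal.ofReal (r ^ (-s)) ^ w *
          (ENNReal.ofReal ((2⁻¹ : ℝ) ^ (1 - s)) ^ w) ^ n :=
        add_le_add (ENNReal.tsum_le_tsum hupper) (ENNReal.tsum_le_tsum hlower)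
    _ = gradConst s w * ENNReal.ofReal (r ^ (-s)) ^ w := by
        rw [ENNReal.tsum_mul_left, ENNReal.tsum_mul_left, ENNReal.tsum_geometric,
          ENNReal.tsum_geometric, ENNReal.ofReal_mul (by positivity),
          ENNReal.mul_rpow_of_nonneg _ _ hw.le, gradConst]
        ring

section Cover

variable {X : Type*} [MetricSpace X]

noncomputable def coverBump (c : ℕ → X) (r : ℕ → ℝ) (x : X) : ℝ≥0∞ :=
  ⨆ i, ENNReal.ofReal (bump (c i) (r i) x)

noncomputable def coverGrad (s : ℝ) (c : ℕ → X) (r : ℕ → ℝ) (k : ℤ) (x : X) : ℝ≥0∞ :=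
  ⨆ i, (ball (c i) (2 * r i)).indicator (fun _ => ENNReal.ofReal (gradWeight s k (r i))) x

variable {c : ℕ → X} {r : ℕ → ℝ} {s : ℝ}

lemma coverBump_le_one (x : X) : coverBump c r x ≤ 1 :=
  iSup_le fun _ => ENNReal.ofReal_le_one.2 (bump_le_one x)

lemma coverBump_ne_top (x : X) : coverBump c r x ≠ ∞ :=
  ne_top_of_le_ne_top ENNReal.one_ne_top (coverBump_le_one x)

lemma one_le_coverBump (hr : ∀ i, 0 < r i) {i : ℕ} {x : X} (hx : x ∈ ball (c i) (r i)) :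
    1 ≤ coverBump c r x :=
  le_iSup_of_le i (by rw [bump_eq_one (hr i) hx, ENNReal.ofReal_one])

lemma coverBump_eq_zero (hr : ∀ i, 0 < r i) {x : X} (hx : x ∉ ⋃ i, ball (c i) (2 * r i)) :
    coverBump c r x = 0 := by
  simp only [mem_iUnion, not_exists] at hx
  simp [coverBump, bump_eq_zero (hr _) (hx _)]

lemma coverGrad_le (k : ℤ) (x : X) :
    coverGrad s c r k x ≤ ENNReal.ofReal (((2 : ℝ) ^ (1 - k)) ^ s) := by
  refine iSup_le fun i => ?_
  by_cases hx : x ∈ ball (c i) (2 * r i)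
  · simpa [hx] using ENNReal.ofReal_le_ofReal (gradWeight_le k)
  · simp [hx]

lemma coverGrad_ne_top (k : ℤ) (x : X) : coverGrad s c r k x ≠ ∞ :=
  ne_top_of_le_ne_top ENNReal.ofReal_ne_top (coverGrad_le k x)

lemma ofReal_gradWeight_le_coverGrad {i : ℕ} {k : ℤ} {x : X} (hx : x ∈ ball (c i) (2 * r i)) :
    ENNReal.ofReal (gradWeight s k (r i)) ≤ coverGrad s c r k x :=
  le_iSup_of_le i (by simp [hx])

lemma coverBump_le_add (hs0 : 0 ≤ s) (hs1 : s ≤ 1) (hr : ∀ i, 0 < r i) {k : ℤ} {x y : X}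
    (hd1 : (2 : ℝ) ^ (k - 1) ≤ dist x y) (hd2 : dist x y < (2 : ℝ) ^ k) :
    coverBump c r x ≤ coverBump c r y +
      ENNReal.ofReal (dist x y ^ s) * (coverGrad s c r k x + coverGrad s c r k y) := by
  refine iSup_le fun i => ?_
  by_cases hxy : x ∈ ball (c i) (2 * r i) ∨ y ∈ ball (c i) (2 * r i)
  · have hG : ENNReal.ofReal (gradWeight s k (r i)) ≤ coverGrad s c r k x + coverGrad s c r k y :=
      hxy.elim (fun h => le_add_right (ofReal_gradWeight_le_coverGrad h))
        (fun h => le_add_left (ofReal_gradWeight_le_coverGrad h))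
    have hbump : bump (c i) (r i) x ≤
        bump (c i) (r i) y + dist x y ^ s * gradWeight s k (r i) := by
      linarith [(abs_sub_le_iff.1 (abs_bump_sub_bump_le (c := c i) (hr i) x y)).1,
        min_one_div_le_rpow_mul_gradWeight hs0 hs1 (hr i) hd1 hd2]
    calc ENNReal.ofReal (bump (c i) (r i) x)
        ≤ ENNReal.ofReal (bump (c i) (r i) y + dist x y ^ s * gradWeight s k (r i)) :=
          ENNReal.ofReal_le_ofReal hbump
      _ = ENNReal.ofReal (bump (c i) (r i) y) +
            ENNReal.ofReal (dist x y ^ s) * ENNReal.ofReal (gradWeight s k (r i)) := by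
          rw [ENNReal.ofReal_add (bump_nonneg y)
            (mul_nonneg (by positivity) (gradWeight_nonneg k (hr i).le)),
            ENNReal.ofReal_mul (by positivity)]
      _ ≤ coverBump c r y +
            ENNReal.ofReal (dist x y ^ s) * (coverGrad s c r k x + coverGrad s c r k y) :=
          add_le_add (le_iSup (fun j => ENNReal.ofReal (bump (c j) (r j) y)) i) (by gcongr)
  · rw [not_or] at hxy
    simp [bump_eq_zero (hr i) hxy.1]

lemma tsum_coverGrad_rpow_le (hs0 : 0 ≤ s) (hs1 : s ≤ 1) (hr : ∀ i, 0 < r i) {w : ℝ} (hw : 0 < w)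
    (x : X) :
    ∑' k, coverGrad s c r k x ^ w ≤
      ∑' i, (ball (c i) (2 * r i)).indicator
        (fun _ => gradConst s w * ENNReal.ofReal (r i ^ (-s)) ^ w) x := by
  calc ∑' k, coverGrad s c r k x ^ w
      ≤ ∑' k, ∑' i, (ball (c i) (2 * r i)).indicator
          (fun _ => ENNReal.ofReal (gradWeight s k (r i)) ^ w) x := by
        refine ENNReal.tsum_le_tsum fun k => ?_
        rw [coverGrad, ENNReal.iSup_rpow _ hw]
        refine iSup_le fun i => le_of_eq_of_le ?_ (ENNReal.le_tsum i)
        by_cases hx : x ∈ ball (c i) (2 * r i) <;> simp [hx, hw]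
    _ = ∑' i, ∑' k, (ball (c i) (2 * r i)).indicator
          (fun _ => ENNReal.ofReal (gradWeight s k (r i)) ^ w) x := ENNReal.tsum_comm
    _ ≤ _ := by
        refine ENNReal.tsum_le_tsum fun i => ?_
        by_cases hx : x ∈ ball (c i) (2 * r i)
        · simpa [hx] using tsum_gradWeight_rpow_le hs0 hs1 hw (hr i)
        · simp [hx]

variable [MeasurableSpace X] [OpensMeasurableSpace X]

lemma measurable_coverBump : Measurable (coverBump c r) :=
  Measurable.iSup fun _ => continuous_bump.measurable.ennreal_ofReal

lemma measurable_coverGrad (k : ℤ) : Measurable (coverGrad s c r k) :=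
  Measurable.iSup fun _ => measurable_const.indicator measurableSet_ball

lemma isFracGradient_coverBump (μ : Measure X) (hs0 : 0 ≤ s) (hs1 : s ≤ 1) (hr : ∀ i, 0 < r i) :
    IsFracGradient μ s (fun x => (coverBump c r x).toReal) univ
      (fun k x => (coverGrad s c r k x).toReal) := by
  refine ⟨fun k => (measurable_coverGrad k).ennreal_toReal, fun _ _ => ENNReal.toReal_nonneg,
    ∅, empty_subset _, measure_empty, fun k x _ y _ hd1 hd2 => ?_⟩
  have hxy := coverBump_le_add (c := c) hs0 hs1 hr hd1 hd2
  have hyx := coverBump_le_add (c := c) hs0 hs1 hr (k := k) (x := y) (y := x)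
    (by rwa [dist_comm]) (by rwa [dist_comm])
  rw [dist_comm y x, add_comm (coverGrad s c r k y)] at hyx
  have h := ENNReal.abs_toReal_sub_toReal_le (coverBump_ne_top x) (coverBump_ne_top y)
    (ENNReal.mul_ne_top ENNReal.ofReal_ne_top
      (ENNReal.add_ne_top.2 ⟨coverGrad_ne_top k x, coverGrad_ne_top k y⟩)) hxy hyx
  rwa [ENNReal.toReal_mul, ENNReal.toReal_ofReal (by positivity),
    ENNReal.toReal_add (coverGrad_ne_top k x) (coverGrad_ne_top k y)] at h

lemma eLpNorm_coverBump_rpow_le (μ : Measure X) {p : ℝ≥0∞} (hp0 : p ≠ 0) (hp : p ≠ ∞)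
    (hr : ∀ i, 0 < r i) :
    eLpNorm (fun x => (coverBump c r x).toReal) p μ ^ p.toReal ≤
      ∑' i, μ (ball (c i) (2 * r i)) := by
  have hp' : 0 < p.toReal := ENNReal.toReal_pos hp0 hp
  have hpt : ∀ x, ‖(coverBump c r x).toReal‖ₑ ^ p.toReal ≤
      (⋃ i, ball (c i) (2 * r i)).indicator 1 x := by
    intro x
    rw [Real.enorm_eq_ofReal ENNReal.toReal_nonneg, ENNReal.ofReal_toReal (coverBump_ne_top x)]
    by_cases hx : x ∈ ⋃ i, ball (c i) (2 * r i)
    · simpa [hx] using ENNReal.rpow_le_one (coverBump_le_one x) hp'.le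
    · simp [hx, coverBump_eq_zero hr hx, hp']
  rw [eLpNorm_eq_lintegral_rpow_enorm_toReal hp0 hp, ← ENNReal.rpow_mul,
    one_div_mul_cancel hp'.ne', ENNReal.rpow_one]
  calc ∫⁻ x, ‖(coverBump c r x).toReal‖ₑ ^ p.toReal ∂μ
      ≤ ∫⁻ x, (⋃ i, ball (c i) (2 * r i)).indicator 1 x ∂μ := lintegral_mono hpt
    _ = μ (⋃ i, ball (c i) (2 * r i)) :=
        lintegral_indicator_one (MeasurableSet.iUnion fun _ => measurableSet_ball)
    _ ≤ ∑' i, μ (ball (c i) (2 * r i)) := measure_iUnion_le _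

lemma lpLqNorm_coverGrad_rpow_le (μ : Measure X) {p q : ℝ≥0∞} (hp : p ≠ ∞)
    (hp0 : 0 < p.toReal) {θ : ℝ} (hθ0 : 0 < θ) (hθ1 : θ ≤ 1)
    (hθq : q ≠ ∞ → p.toReal * θ ≤ q.toReal) (hs0 : 0 ≤ s) (hs1 : s ≤ 1) (hr : ∀ i, 0 < r i) :
    lpLqNorm μ p q (fun k x => (coverGrad s c r k x).toReal) ^ (p.toReal * θ) ≤
      gradConst s (p.toReal * θ) *
        ∑' i, ENNReal.ofReal (r i ^ (-s)) ^ (p.toReal * θ) * μ (ball (c i) (2 * r i)) ^ θ := by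
  have hw : 0 < p.toReal * θ := mul_pos hp0 hθ0
  set K : ℕ → ℝ≥0∞ := fun i =>
    gradConst s (p.toReal * θ) * ENNReal.ofReal (r i ^ (-s)) ^ (p.toReal * θ)
  have hK : ∀ i, (∫⁻ x, (ball (c i) (2 * r i)).indicator (fun _ => K i) x ^ θ⁻¹ ∂μ) ^ θ =
      K i * μ (ball (c i) (2 * r i)) ^ θ := by
    intro i
    have hind : ∀ x, (ball (c i) (2 * r i)).indicator (fun _ => K i) x ^ θ⁻¹ =
        (ball (c i) (2 * r i)).indicator (fun _ => K i ^ θ⁻¹) x := by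
      intro x
      by_cases hx : x ∈ ball (c i) (2 * r i) <;> simp [hx, hθ0]
    rw [lintegral_congr hind, lintegral_indicator_const measurableSet_ball,
      ENNReal.mul_rpow_of_nonneg _ _ hθ0.le, ← ENNReal.rpow_mul, inv_mul_cancel₀ hθ0.ne',
      ENNReal.rpow_one]
  calc lpLqNorm μ p q (fun k x => (coverGrad s c r k x).toReal) ^ (p.toReal * θ)
      ≤ ∑' i, (∫⁻ x, (ball (c i) (2 * r i)).indicator (fun _ => K i) x ^ θ⁻¹ ∂μ) ^ θ := by
        refine lpLqNorm_rpow_le_tsum μ hp hp0 hθ0 hθ1 hθq _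
          (fun i => measurable_const.indicator measurableSet_ball) fun x => ?_
        simp_rw [abs_of_nonneg ENNReal.toReal_nonneg, ENNReal.ofReal_toReal (coverGrad_ne_top _ x)]
        exact tsum_coverGrad_rpow_le hs0 hs1 hr hw x
    _ = _ := by simp_rw [hK, K, mul_assoc, ENNReal.tsum_mul_left]

end Cover

lemma tsum_rpow_mul_measure_ball_two_mul_le {X : Type*} [MetricSpace X] [MeasurableSpace X]
    (μ : Measure X) {c_d : ℝ≥0∞}
    (hdbl : ∀ (x : X) (r : ℝ), 0 < r → μ (ball x (2 * r)) ≤ c_d * μ (ball x r)) (s p : ℝ) {θ : ℝ}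
    (hθ : 0 ≤ θ) {c : ℕ → X} {r : ℕ → ℝ} (hr : ∀ i, 0 < r i) :
    ∑' i, ENNReal.ofReal (r i ^ (-s)) ^ (p * θ) * μ (ball (c i) (2 * r i)) ^ θ ≤
      c_d ^ θ * ∑' i, (μ (ball (c i) (r i)) / ENNReal.ofReal (r i ^ (s * p))) ^ θ := by
  rw [← ENNReal.tsum_mul_left]
  refine ENNReal.tsum_le_tsum fun i => ?_
  rw [ENNReal.div_ofReal_rpow_rpow_eq (hr i) _ _ _ hθ, mul_left_comm,
    ← ENNReal.mul_rpow_of_nonneg _ _ hθ]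
  gcongr
  exact hdbl _ _ (hr i)

theorem tlCapacity_rpow_le_of_cover {X : Type*} [MetricSpace X] [MeasurableSpace X]
    [OpensMeasurableSpace X] (μ : Measure X) {s : ℝ} (hs0 : 0 ≤ s) (hs1 : s ≤ 1) {p q : ℝ≥0∞}
    (hp0 : p ≠ 0) (hp : p ≠ ∞) {θ : ℝ} (hθ0 : 0 < θ) (hθ1 : θ ≤ 1)
    (hθq : q ≠ ∞ → p.toReal * θ ≤ q.toReal) {E : Set X} {c : ℕ → X} {r : ℕ → ℝ}
    (hcov : E ⊆ ⋃ i, ball (c i) (r i)) (hr : ∀ i, 0 < r i ∧ r i ≤ 1) :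
    tlCapacity μ s p q E ^ θ ≤ 2 ^ (p.toReal * θ) * (1 + gradConst s (p.toReal * θ)) *
      ∑' i, ENNReal.ofReal (r i ^ (-s)) ^ (p.toReal * θ) * μ (ball (c i) (2 * r i)) ^ θ := by
  have hp' : 0 < p.toReal := ENNReal.toReal_pos hp0 hp
  have hr0 : ∀ i, 0 < r i := fun i => (hr i).1
  set w := p.toReal * θ
  set u := fun x => (coverBump c r x).toReal
  set g := fun k x => (coverGrad s c r k x).toReal
  set S := ∑' i, ENNReal.ofReal (r i ^ (-s)) ^ w * μ (ball (c i) (2 * r i)) ^ θ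
  have hweight : ∀ i, 1 ≤ ENNReal.ofReal (r i ^ (-s)) ^ w := fun i =>
    ENNReal.one_le_rpow (ENNReal.one_le_ofReal.2
      (Real.one_le_rpow_of_pos_of_le_one_of_nonpos (hr0 i) (hr i).2 (by linarith))) (by positivity)
  have hu : eLpNorm u p μ ^ w ≤ S :=
    calc eLpNorm u p μ ^ w = (eLpNorm u p μ ^ p.toReal) ^ θ := ENNReal.rpow_mul _ _ _
      _ ≤ (∑' i, μ (ball (c i) (2 * r i))) ^ θ := by
          gcongr; exact eLpNorm_coverBump_rpow_le μ hp0 hp hr0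
      _ ≤ ∑' i, μ (ball (c i) (2 * r i)) ^ θ := ENNReal.rpow_tsum_le_tsum_rpow _ hθ0 hθ1
      _ ≤ S := ENNReal.tsum_le_tsum fun i => le_mul_of_one_le_left' (hweight i)
  have hg : lpLqNorm μ p q g ^ w ≤ gradConst s w * S :=
    lpLqNorm_coverGrad_rpow_le μ hp hp' hθ0 hθ1 hθq hs0 hs1 hr0
  have hcap : tlCapacity μ s p q E ≤ (eLpNorm u p μ + lpLqNorm μ p q g) ^ p.toReal :=
    tlCapacity_le_rpow_of_isFracGradient μ hp' (isOpen_iUnion fun _ => isOpen_ball) hcov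
      measurable_coverBump.ennreal_toReal
      (fun x hx => by
        obtain ⟨i, hi⟩ := mem_iUnion.1 hx
        simpa using ENNReal.toReal_mono (coverBump_ne_top x) (one_le_coverBump hr0 hi))
      (isFracGradient_coverBump μ hs0 hs1 hr0)
  calc tlCapacity μ s p q E ^ θ ≤ ((eLpNorm u p μ + lpLqNorm μ p q g) ^ p.toReal) ^ θ := by
        gcongr
    _ = (eLpNorm u p μ + lpLqNorm μ p q g) ^ w := (ENNReal.rpow_mul _ _ _).symm
    _ ≤ 2 ^ w * (eLpNorm u p μ ^ w + lpLqNorm μ p q g ^ w) :=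
        ENNReal.add_rpow_le_two_rpow_mul _ _ (by positivity)
    _ ≤ 2 ^ w * (S + gradConst s w * S) := by gcongr
    _ = 2 ^ w * (1 + gradConst s w) * S := by ring

section Exponent

variable {p q : ℝ≥0∞}

lemma toReal_min_one_div_pos (hp : p ≠ ∞) (hq : q ≠ 0) : 0 < (min 1 (q / p)).toReal :=
  ENNReal.toReal_pos (lt_min one_pos (ENNReal.div_pos hq hp)).ne'
    (ne_top_of_le_ne_top ENNReal.one_ne_top (min_le_left _ _))

lemma toReal_min_one_div_le_one : (min 1 (q / p)).toReal ≤ 1 :=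
  ENNReal.toReal_le_of_le_ofReal zero_le_one (by simp)

lemma mul_toReal_min_one_div_le (hq : q ≠ ∞) : p.toReal * (min 1 (q / p)).toReal ≤ q.toReal := by
  rcases eq_or_ne p.toReal 0 with hp | hp
  · simp [hp]
  have hp0 : p ≠ 0 := fun h => hp (by simp [h])
  calc p.toReal * (min 1 (q / p)).toReal ≤ p.toReal * (q / p).toReal := by
        gcongr
        · exact ENNReal.div_ne_top hq hp0
        · exact min_le_right _ _
    _ = q.toReal := by rw [ENNReal.toReal_div, mul_div_cancel₀ _ hp]

end Exponent

/-- `cap_{M^s_{p,q}}(E)^θ ≤ C ℋ^h(E)` with `θ = min{1, q/p}` and ball gauge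
`h(B(x,ρ)) = (μ(B(x,ρ))/ρ^{sp})^θ`. -/
theorem capacity_le_hausdorff {X : Type*} [MetricSpace X] [MeasurableSpace X] [BorelSpace X]
    (μ : Measure X) (hd : IsDoubling μ)
    (s : ℝ) (p q : ℝ≥0∞) (hs0 : 0 < s) (hs1 : s < 1)
    (hp0 : 0 < p) (hpfin : p ≠ ∞) (hq0 : 0 < q)
    (E : Set X) :
    ∃ C : ℝ≥0∞, 0 < C ∧ C < ∞ ∧
      tlCapacity μ s p q E ^ (min 1 (q / p)).toReal ≤
        C * hMeasureBall (fun x ρ =>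
          (μ (ball x ρ) / ENNReal.ofReal (ρ ^ (s * p.toReal))) ^ (min 1 (q / p)).toReal) E := by
  obtain ⟨-, c_d, hcd1, hcd, hdbl⟩ := hd
  set θ := (min 1 (q / p)).toReal
  have hθ0 : 0 < θ := toReal_min_one_div_pos hpfin hq0.ne'
  set C := 2 ^ (p.toReal * θ) * (1 + gradConst s (p.toReal * θ)) * c_d ^ θ
  have hC0 : C ≠ 0 := by
    have : c_d ≠ 0 := (zero_lt_one.trans_le hcd1).ne'
    simp [C, ENNReal.rpow_eq_zero_iff, this, hcd.ne]
  have hC : C ≠ ∞ :=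
    ENNReal.mul_ne_top (ENNReal.mul_ne_top (ENNReal.rpow_ne_top_of_nonneg (by positivity)
      ENNReal.ofNat_ne_top) (ENNReal.add_ne_top.2 ⟨ENNReal.one_ne_top,
        (gradConst_lt_top hs0 hs1 (mul_pos (ENNReal.toReal_pos hp0.ne' hpfin) hθ0)).ne⟩))
      (ENNReal.rpow_ne_top_of_nonneg hθ0.le hcd.ne)
  refine ⟨C, pos_iff_ne_zero.2 hC0, hC.lt_top, ?_⟩
  rw [mul_comm, ← ENNReal.div_le_iff hC0 hC, hMeasureBall]
  refine le_iSup₂_of_le 1 one_pos (le_iInf₂ fun c r => le_iInf₂ fun hcov hr => ?_)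
  rw [ENNReal.div_le_iff hC0 hC, mul_comm, mul_assoc]
  refine (tlCapacity_rpow_le_of_cover μ hs0.le hs1.le hp0.ne' hpfin hθ0 toReal_min_one_div_le_one
    mul_toReal_min_one_div_le hcov hr).trans ?_
  gcongr
  exact tsum_rpow_mul_measure_ball_two_mul_le μ hdbl s p.toReal hθ0.le fun i => (hr i).1
end

section
/- Let s,p ∈ (0,1), n ∈ ℕ, 0<γ≤1/2. For u ∈ W^{s,p}(ℝ^n), define g(x) = sup_{j∈ℕ} 2^{js}·(⨍_{B(x,2^{−j})} |u(z) − m_u^γ(B(x,2^{−j}))|^p dz)^{1/p}. Then there is a constant C (depending only on n, s, p, γ) such that g(x) ≤ C·(∫_{ℝ^n} |u(z)−u(x)|^p/|z−x|^{n+sp} dz)^{1/p} for a.e. x, and consequently ‖g‖_{L^p(ℝ^n)} ≤ C·‖u‖_{W^{s,p}(ℝ^n)} < ∞. -/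
/-!
Fix `x` and a scale `r = 2^{-j}`, and let `m` be the `γ`-median of `u` on `B = B(x, r)`. On a
subset of `B` of measure at least `γ |B|`, `u` lies on the other side of `m` from `u x`, so
`γ |B| |u x - m|^p ≤ ∫_B |u - u x|^p`. Since `|a + b|^p ≤ |a|^p + |b|^p` for `p ≤ 1`, this gives
`∫_B |u - m|^p ≤ (1 + γ⁻¹) ∫_B |u - u x|^p`, and `|z - x|^{n + sp} ≤ r^{n + sp}` on `B` bounds the
latter by `r^{n + sp}` times the Gagliardo integral at `x`. After dividing by `|B| = r^n |B(0,1)|`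
and taking `p`-th roots, the remaining factor `r^s` cancels `2^{js}`; this bound holds at every
`x`, and integrating its `p`-th power gives the `L^p` estimate.
-/

open MeasureTheory Metric Set Filter ENNReal

/-- Membership in the fractional Sobolev space `W^{s,p}(ℝ^n)`. -/
def MemWsp (n : ℕ) (s p : ℝ) (u : EuclideanSpace ℝ (Fin n) → ℝ) : Prop :=
  MemLp u (ENNReal.ofReal p) volume ∧
  (∫⁻ x, ∫⁻ y, ENNReal.ofReal (|u x - u y| ^ p / dist x y ^ ((n : ℝ) + s * p))) < ∞

/-- The `W^{s,p}(ℝ^n)` (quasi)norm, as an extended real. -/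
noncomputable def wspNorm (n : ℕ) (s p : ℝ) (u : EuclideanSpace ℝ (Fin n) → ℝ) : ℝ≥0∞ :=
  ((∫⁻ x, ENNReal.ofReal (|u x| ^ p)) +
    ∫⁻ x, ∫⁻ y, ENNReal.ofReal (|u x - u y| ^ p / dist x y ^ ((n : ℝ) + s * p))) ^ (1 / p)

/-- The maximal-type function
`g(x) = sup_j 2^{js} (⨍_{B(x,2^{-j})} |u(z) - m_u^γ(B(x,2^{-j}))|^p dz)^{1/p}`. -/
noncomputable def gFun (n : ℕ) (s p γ : ℝ) (u : EuclideanSpace ℝ (Fin n) → ℝ)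
    (x : EuclideanSpace ℝ (Fin n)) : ℝ≥0∞ :=
  ⨆ j : ℕ, ENNReal.ofReal ((2:ℝ) ^ ((j : ℝ) * s)) *
    ((volume (ball x ((2:ℝ) ^ (-(j : ℝ)))))⁻¹ *
      ∫⁻ z in ball x ((2:ℝ) ^ (-(j : ℝ))),
        ENNReal.ofReal (|u z - med volume γ u (ball x ((2:ℝ) ^ (-(j : ℝ))))| ^ p)) ^ (1 / p)

theorem monotone_setOf_lt {X : Type*} {u : X → ℝ} {A : Set X} :
    Monotone fun M : ℝ => {x ∈ A | u x < M} :=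
  fun _ _ h _ hx => ⟨hx.1, hx.2.trans_le h⟩

theorem abs_sub_rpow_le_add {a b c p : ℝ} (hp0 : 0 ≤ p) (hp1 : p ≤ 1) :
    |a - c| ^ p ≤ |a - b| ^ p + |b - c| ^ p :=
  (Real.rpow_le_rpow (abs_nonneg _) (abs_sub_le a b c) hp0).trans
    (Real.rpow_add_le_add_rpow (abs_nonneg _) (abs_nonneg _) hp0 hp1)

section Median

variable {X : Type*} [MeasurableSpace X] {μ : Measure X} {γ : ℝ} {u : X → ℝ} {A : Set X}

theorem exists_measure_setOf_lt_le (hu : Measurable u) (hA : MeasurableSet A)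
    (hA0 : μ A ≠ 0) (hAfin : μ A ≠ ∞) (hγ0 : 0 < γ) :
    ∃ M, μ {x ∈ A | u x < M} ≤ ENNReal.ofReal γ * μ A := by
  have hempty : ⋂ M : ℝ, {x ∈ A | u x < M} = ∅ :=
    eq_empty_of_forall_notMem fun x hx => (mem_iInter.1 hx (u x)).2.false
  have hinf : ⨅ M : ℝ, μ {x ∈ A | u x < M} < ENNReal.ofReal γ * μ A := by
    rw [← monotone_setOf_lt.measure_iInter
      (fun M => (hA.inter (hu measurableSet_Iio)).nullMeasurableSet)
      ⟨0, ne_top_of_le_ne_top hAfin (measure_mono inter_subset_left)⟩, hempty, measure_empty]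
    exact ENNReal.mul_pos (ENNReal.ofReal_pos.2 hγ0).ne' hA0
  obtain ⟨M, hM⟩ := iInf_lt_iff.1 hinf
  exact ⟨M, hM.le⟩

theorem exists_lt_measure_setOf_lt (hA0 : μ A ≠ 0) (hAfin : μ A ≠ ∞) (hγ1 : γ < 1) :
    ∃ M, ENNReal.ofReal γ * μ A < μ {x ∈ A | u x < M} := by
  have hunion : ⋃ M : ℝ, {x ∈ A | u x < M} = A :=
    Subset.antisymm (iUnion_subset fun _ => sep_subset _ _)
      fun x hx => mem_iUnion.2 ⟨u x + 1, hx, lt_add_one _⟩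
  apply lt_iSup_iff.1
  rw [← monotone_setOf_lt.measure_iUnion, hunion]
  calc ENNReal.ofReal γ * μ A < 1 * μ A := by
        gcongr
        exact ENNReal.ofReal_lt_one.2 hγ1
    _ = μ A := one_mul _

theorem measure_setOf_lt_med_le (hne : ∃ M, μ {x ∈ A | u x < M} ≤ ENNReal.ofReal γ * μ A) :
    μ {x ∈ A | u x < med μ γ u A} ≤ ENNReal.ofReal γ * μ A := by
  set m := med μ γ u A
  have hunion : {x ∈ A | u x < m} = ⋃ k : ℕ, {x ∈ A | u x < m - 1 / (k + 1)} := by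
    ext x
    simp only [mem_iUnion, mem_ofPred_eq]
    refine ⟨fun ⟨hxA, hx⟩ => ?_, fun ⟨k, hxA, hx⟩ => ⟨hxA, hx.trans (sub_lt_self m Nat.one_div_pos_of_nat)⟩⟩
    obtain ⟨k, hk⟩ := exists_nat_one_div_lt (sub_pos.2 hx)
    exact ⟨k, hxA, by linarith⟩
  have hmono : Monotone fun k : ℕ => {x ∈ A | u x < m - 1 / (k + 1)} :=
    fun _ _ h => monotone_setOf_lt (sub_le_sub_left (Nat.one_div_le_one_div h) m)
  rw [hunion, hmono.measure_iUnion]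
  refine iSup_le fun k => ?_
  obtain ⟨M, hM, hkM⟩ := exists_lt_of_lt_csSup hne (sub_lt_self m Nat.one_div_pos_of_nat)
  exact (measure_mono (monotone_setOf_lt hkM.le)).trans hM

theorem le_measure_setOf_le_med (hu : Measurable u) (hA : MeasurableSet A) (hAfin : μ A ≠ ∞)
    (hbdd : BddAbove {M | μ {x ∈ A | u x < M} ≤ ENNReal.ofReal γ * μ A}) :
    ENNReal.ofReal γ * μ A ≤ μ {x ∈ A | u x ≤ med μ γ u A} := by
  set m := med μ γ u A
  have hinter : {x ∈ A | u x ≤ m} = ⋂ k : ℕ, {x ∈ A | u x < m + 1 / (k + 1)} := by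
    ext x
    simp only [mem_iInter, mem_ofPred_eq]
    refine ⟨fun ⟨hxA, hx⟩ k => ⟨hxA, hx.trans_lt (lt_add_of_pos_right m Nat.one_div_pos_of_nat)⟩, fun hx => ⟨(hx 0).1, ?_⟩⟩
    refine le_of_forall_pos_lt_add fun ε hε => ?_
    obtain ⟨k, hk⟩ := exists_nat_one_div_lt hε
    linarith [(hx k).2]
  have hanti : Antitone fun k : ℕ => {x ∈ A | u x < m + 1 / (k + 1)} :=
    fun _ _ h => monotone_setOf_lt (add_le_add_right (Nat.one_div_le_one_div h) m)
  rw [hinter, hanti.measure_iInter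
    (fun _ => (hA.inter (hu measurableSet_Iio)).nullMeasurableSet)
    ⟨0, ne_top_of_le_ne_top hAfin (measure_mono inter_subset_left)⟩]
  refine le_iInf fun k => le_of_lt (not_le.1 fun hk => ?_)
  exact (lt_add_of_pos_right m Nat.one_div_pos_of_nat).not_ge (le_csSup hbdd hk)

theorem le_measure_setOf_med_le (hAfin : μ A ≠ ∞) (hγ : γ ≤ 1 / 2)
    (hne : ∃ M, μ {x ∈ A | u x < M} ≤ ENNReal.ofReal γ * μ A) :
    ENNReal.ofReal γ * μ A ≤ μ {x ∈ A | med μ γ u A ≤ u x} := by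
  set m := med μ γ u A
  have hfin : ENNReal.ofReal γ * μ A ≠ ∞ := ENNReal.mul_ne_top ENNReal.ofReal_ne_top hAfin
  have htwice : ENNReal.ofReal γ * μ A + ENNReal.ofReal γ * μ A ≤ μ A := by
    have h2 : 2 * ENNReal.ofReal γ ≤ 1 := by
      rw [← ENNReal.ofReal_ofNat 2, ← ENNReal.ofReal_mul zero_le_two]
      exact ENNReal.ofReal_le_one.2 (by linarith)
    calc _ = 2 * ENNReal.ofReal γ * μ A := by rw [← two_mul, mul_assoc]
      _ ≤ μ A := mul_le_of_le_one_left zero_le h2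
  have hsplit : μ A ≤ μ {x ∈ A | u x < m} + μ {x ∈ A | m ≤ u x} :=
    (measure_mono fun x hx => (lt_or_ge (u x) m).imp (⟨hx, ·⟩) (⟨hx, ·⟩)).trans
      (measure_union_le _ _)
  refine (ENNReal.add_le_add_iff_left hfin).1 ?_
  calc _ ≤ μ A := htwice
    _ ≤ _ := hsplit.trans (by gcongr; exact measure_setOf_lt_med_le hne)

theorem ofReal_abs_sub_med_rpow_mul_le (hu : Measurable u) (hA : MeasurableSet A)
    (hA0 : μ A ≠ 0) (hAfin : μ A ≠ ∞) (hγ0 : 0 < γ) (hγ : γ ≤ 1 / 2) {p : ℝ} (hp : 0 ≤ p)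
    (x : X) :
    ENNReal.ofReal (|u x - med μ γ u A| ^ p) * (ENNReal.ofReal γ * μ A) ≤
      ∫⁻ y in A, ENNReal.ofReal (|u y - u x| ^ p) ∂μ := by
  set m := med μ γ u A
  have hne := exists_measure_setOf_lt_le hu hA hA0 hAfin hγ0
  have hbdd : BddAbove {M | μ {x ∈ A | u x < M} ≤ ENNReal.ofReal γ * μ A} := by
    obtain ⟨M, hM⟩ := exists_lt_measure_setOf_lt (u := u) (γ := γ) hA0 hAfin (by linarith)
    exact ⟨M, fun M' hM' => le_of_not_gt fun h =>
      (hM.trans_le (measure_mono (monotone_setOf_lt h.le))).not_ge hM'⟩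
  obtain ⟨T, hTA, hT, hTμ⟩ : ∃ T ⊆ A, (∀ y ∈ T, |u x - m| ≤ |u y - u x|) ∧
      ENNReal.ofReal γ * μ A ≤ μ T := by
    rcases le_total (u x) m with h | h
    · refine ⟨{y ∈ A | m ≤ u y}, sep_subset _ _, fun y hy => ?_,
        le_measure_setOf_med_le hAfin hγ hne⟩
      rw [abs_of_nonpos (by linarith), abs_of_nonneg (by linarith [hy.2])]
      linarith [hy.2]
    · refine ⟨{y ∈ A | u y ≤ m}, sep_subset _ _, fun y hy => ?_,
        le_measure_setOf_le_med hu hA hAfin hbdd⟩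
      rw [abs_of_nonneg (by linarith), abs_of_nonpos (by linarith [hy.2])]
      linarith [hy.2]
  set c := ENNReal.ofReal (|u x - m| ^ p)
  have hsub : T ⊆ {y | c ≤ ENNReal.ofReal (|u y - u x| ^ p)} ∩ A := fun y hy =>
    ⟨ENNReal.ofReal_le_ofReal (Real.rpow_le_rpow (abs_nonneg _) (hT y hy) hp), hTA hy⟩
  calc c * (ENNReal.ofReal γ * μ A)
      ≤ c * μ.restrict A {y | c ≤ ENNReal.ofReal (|u y - u x| ^ p)} :=
        mul_le_mul_right (hTμ.trans ((measure_mono hsub).trans (Measure.le_restrict_apply _ _))) c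
    _ ≤ _ := mul_meas_ge_le_lintegral₀ (by fun_prop) c

theorem setLIntegral_abs_sub_med_rpow_le (hu : Measurable u) (hA : MeasurableSet A)
    (hA0 : μ A ≠ 0) (hAfin : μ A ≠ ∞) (hγ0 : 0 < γ) (hγ : γ ≤ 1 / 2) {p : ℝ} (hp0 : 0 ≤ p)
    (hp1 : p ≤ 1) (x : X) :
    ∫⁻ z in A, ENNReal.ofReal (|u z - med μ γ u A| ^ p) ∂μ ≤
      (1 + (ENNReal.ofReal γ)⁻¹) * ∫⁻ z in A, ENNReal.ofReal (|u z - u x| ^ p) ∂μ := by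
  set m := med μ γ u A
  set J := ∫⁻ z in A, ENNReal.ofReal (|u z - u x| ^ p) ∂μ
  set c := ENNReal.ofReal (|u x - m| ^ p)
  have hγ' : ENNReal.ofReal γ ≠ 0 := (ENNReal.ofReal_pos.2 hγ0).ne'
  have hmed : c * μ A ≤ (ENNReal.ofReal γ)⁻¹ * J := by
    rw [← ENNReal.mul_le_iff_le_inv hγ' ENNReal.ofReal_ne_top, mul_left_comm]
    exact ofReal_abs_sub_med_rpow_mul_le hu hA hA0 hAfin hγ0 hγ hp0 x
  calc ∫⁻ z in A, ENNReal.ofReal (|u z - m| ^ p) ∂μ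
      ≤ ∫⁻ z in A, (ENNReal.ofReal (|u z - u x| ^ p) + c) ∂μ := by
        refine lintegral_mono fun z => ?_
        rw [← ENNReal.ofReal_add (by positivity) (by positivity)]
        exact ENNReal.ofReal_le_ofReal (abs_sub_rpow_le_add hp0 hp1)
    _ = J + c * μ A := by
        rw [lintegral_add_right _ measurable_const, setLIntegral_const]
    _ ≤ J + (ENNReal.ofReal γ)⁻¹ * J := by gcongr
    _ = (1 + (ENNReal.ofReal γ)⁻¹) * J := by ring

end Median

theorem setLIntegral_ball_le_rpow_mul_lintegral_div {X : Type*} [MetricSpace X]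
    [MeasurableSpace X] [OpensMeasurableSpace X] {μ : Measure X} {f : X → ℝ} {x : X} {r α : ℝ}
    (hα : 0 ≤ α) (hf : ∀ z, 0 ≤ f z) (hfx : f x = 0) :
    ∫⁻ z in ball x r, ENNReal.ofReal (f z) ∂μ ≤
      ENNReal.ofReal (r ^ α) * ∫⁻ z, ENNReal.ofReal (f z / dist z x ^ α) ∂μ := by
  have hpt : ∀ z ∈ ball x r,
      ENNReal.ofReal (f z) ≤ ENNReal.ofReal (r ^ α) * ENNReal.ofReal (f z / dist z x ^ α) := by
    intro z hz
    rw [← ENNReal.ofReal_mul (Real.rpow_nonneg (dist_nonneg.trans (mem_ball.1 hz).le) α)]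
    refine ENNReal.ofReal_le_ofReal ?_
    rcases eq_or_ne z x with rfl | hzx
    · rw [hfx, zero_div, mul_zero]
    have hd : 0 < dist z x ^ α := Real.rpow_pos_of_pos (dist_pos.2 hzx) α
    calc f z = dist z x ^ α * (f z / dist z x ^ α) := by field_simp
      _ ≤ r ^ α * (f z / dist z x ^ α) := by
        gcongr
        · exact div_nonneg (hf z) hd.le
        · exact (mem_ball.1 hz).le
  calc ∫⁻ z in ball x r, ENNReal.ofReal (f z) ∂μ
      ≤ ∫⁻ z in ball x r, ENNReal.ofReal (r ^ α) * ENNReal.ofReal (f z / dist z x ^ α) ∂μ :=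
        setLIntegral_mono' measurableSet_ball hpt
    _ = ENNReal.ofReal (r ^ α) * ∫⁻ z in ball x r, ENNReal.ofReal (f z / dist z x ^ α) ∂μ :=
        lintegral_const_mul' _ _ ENNReal.ofReal_ne_top
    _ ≤ ENNReal.ofReal (r ^ α) * ∫⁻ z, ENNReal.ofReal (f z / dist z x ^ α) ∂μ := by
        gcongr
        exact Measure.restrict_le_self

noncomputable def gagliardoDensity (n : ℕ) (s p : ℝ) (u : EuclideanSpace ℝ (Fin n) → ℝ)
    (x : EuclideanSpace ℝ (Fin n)) : ℝ≥0∞ :=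
  ∫⁻ z, ENNReal.ofReal (|u z - u x| ^ p / dist z x ^ ((n : ℝ) + s * p))

section Euclidean

variable {n : ℕ} {s p γ : ℝ} {u : EuclideanSpace ℝ (Fin n) → ℝ}

theorem average_abs_sub_med_rpow_le (hu : Measurable u) (hs : 0 ≤ s) (hp0 : 0 < p)
    (hp1 : p ≤ 1) (hγ0 : 0 < γ) (hγ : γ ≤ 1 / 2) (x : EuclideanSpace ℝ (Fin n)) {r : ℝ}
    (hr : 0 < r) :
    (volume (ball x r))⁻¹ * ∫⁻ z in ball x r, ENNReal.ofReal (|u z - med volume γ u (ball x r)| ^ p)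
      ≤ (1 + (ENNReal.ofReal γ)⁻¹) / volume (ball (0 : EuclideanSpace ℝ (Fin n)) 1) *
        ENNReal.ofReal (r ^ (s * p)) * gagliardoDensity n s p u x := by
  set K := 1 + (ENNReal.ofReal γ)⁻¹
  set c := volume (ball (0 : EuclideanSpace ℝ (Fin n)) 1)
  set a := ENNReal.ofReal (r ^ n)
  have hvol : volume (ball x r) = a * c := by
    rw [Measure.addHaar_ball_of_pos _ _ hr, finrank_euclideanSpace_fin]
  have ha0 : a ≠ 0 := (ENNReal.ofReal_pos.2 (pow_pos hr n)).ne'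
  have hscale : ENNReal.ofReal (r ^ ((n : ℝ) + s * p)) = a * ENNReal.ofReal (r ^ (s * p)) := by
    rw [Real.rpow_add hr, Real.rpow_natCast, ENNReal.ofReal_mul (pow_nonneg hr.le n)]
  calc (volume (ball x r))⁻¹ *
        ∫⁻ z in ball x r, ENNReal.ofReal (|u z - med volume γ u (ball x r)| ^ p)
      ≤ (volume (ball x r))⁻¹ * (K * ∫⁻ z in ball x r, ENNReal.ofReal (|u z - u x| ^ p)) := by
        gcongr
        exact setLIntegral_abs_sub_med_rpow_le hu measurableSet_ball (measure_ball_pos _ _ hr).ne'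
          measure_ball_lt_top.ne hγ0 hγ hp0.le hp1 x
    _ ≤ (volume (ball x r))⁻¹ *
        (K * (ENNReal.ofReal (r ^ ((n : ℝ) + s * p)) * gagliardoDensity n s p u x)) := by
        gcongr
        exact setLIntegral_ball_le_rpow_mul_lintegral_div (by positivity)
          (fun z => by positivity) (by simp [Real.zero_rpow hp0.ne'])
    _ = (a⁻¹ * a) * (K / c * ENNReal.ofReal (r ^ (s * p)) * gagliardoDensity n s p u x) := by
        rw [hvol, hscale, ENNReal.mul_inv (Or.inl ha0) (Or.inl ENNReal.ofReal_ne_top),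
          div_eq_mul_inv]
        ring
    _ = _ := by rw [ENNReal.inv_mul_cancel ha0 ENNReal.ofReal_ne_top, one_mul]

theorem gFun_le_mul_gagliardoDensity_rpow (hu : Measurable u) (hs : 0 ≤ s) (hp0 : 0 < p)
    (hp1 : p ≤ 1) (hγ0 : 0 < γ) (hγ : γ ≤ 1 / 2) (x : EuclideanSpace ℝ (Fin n)) :
    gFun n s p γ u x ≤
      ((1 + (ENNReal.ofReal γ)⁻¹) / volume (ball (0 : EuclideanSpace ℝ (Fin n)) 1)) ^ (1 / p) *
        gagliardoDensity n s p u x ^ (1 / p) := by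
  refine iSup_le fun j => ?_
  set r := (2 : ℝ) ^ (-(j : ℝ))
  have hr : 0 < r := by positivity
  have hscale : ENNReal.ofReal ((2 : ℝ) ^ ((j : ℝ) * s)) * ENNReal.ofReal (r ^ (s * p)) ^ (1 / p)
      = 1 := by
    rw [ENNReal.ofReal_rpow_of_nonneg (by positivity) (by positivity), ← Real.rpow_mul hr.le,
      ← ENNReal.ofReal_mul (by positivity), ← Real.rpow_mul zero_le_two, ← Real.rpow_add two_pos]
    field_simp
    simp
  calc _ ≤ ENNReal.ofReal ((2 : ℝ) ^ ((j : ℝ) * s)) *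
        ((1 + (ENNReal.ofReal γ)⁻¹) / volume (ball (0 : EuclideanSpace ℝ (Fin n)) 1) *
          ENNReal.ofReal (r ^ (s * p)) * gagliardoDensity n s p u x) ^ (1 / p) := by
        gcongr _ * ?_ ^ _
        exact average_abs_sub_med_rpow_le hu hs hp0 hp1 hγ0 hγ x hr
    _ = _ := by
        rw [ENNReal.mul_rpow_of_nonneg _ _ (by positivity),
          ENNReal.mul_rpow_of_nonneg _ _ (by positivity), mul_comm _ (ENNReal.ofReal _ ^ _),
          ← mul_assoc, ← mul_assoc, hscale, one_mul]

end Euclidean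

theorem lintegral_rpow_rpow_le_of_le_mul_rpow {X : Type*} [MeasurableSpace X] {μ : Measure X}
    {f F : X → ℝ≥0∞} {C : ℝ≥0∞} {p : ℝ} (hp : 0 < p) (hC : C ≠ ∞)
    (h : ∀ᵐ x ∂μ, f x ≤ C * F x ^ (1 / p)) :
    (∫⁻ x, f x ^ p ∂μ) ^ (1 / p) ≤ C * (∫⁻ x, F x ∂μ) ^ (1 / p) := by
  have hpow : ∀ a : ℝ≥0∞, (a ^ (1 / p)) ^ p = a := fun a => by
    rw [← ENNReal.rpow_mul, one_div_mul_cancel hp.ne', ENNReal.rpow_one]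
  calc (∫⁻ x, f x ^ p ∂μ) ^ (1 / p)
      ≤ (∫⁻ x, C ^ p * F x ∂μ) ^ (1 / p) := by
        gcongr ?_ ^ _
        refine lintegral_mono_ae (h.mono fun x hx => ?_)
        calc f x ^ p ≤ (C * F x ^ (1 / p)) ^ p := by gcongr
          _ = C ^ p * F x := by rw [ENNReal.mul_rpow_of_nonneg _ _ hp.le, hpow]
    _ = C * (∫⁻ x, F x ∂μ) ^ (1 / p) := by
        rw [lintegral_const_mul' _ _ (ENNReal.rpow_ne_top_of_nonneg hp.le hC),
          ENNReal.mul_rpow_of_nonneg _ _ (by positivity), ← ENNReal.rpow_mul,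
          mul_one_div_cancel hp.ne', ENNReal.rpow_one]

theorem lintegral_gagliardoDensity_rpow_le_wspNorm {n : ℕ} {s p : ℝ} (hp : 0 ≤ p)
    (u : EuclideanSpace ℝ (Fin n) → ℝ) :
    (∫⁻ x, gagliardoDensity n s p u x) ^ (1 / p) ≤ wspNorm n s p u := by
  have hsymm : ∫⁻ x, gagliardoDensity n s p u x =
      ∫⁻ x, ∫⁻ y, ENNReal.ofReal (|u x - u y| ^ p / dist x y ^ ((n : ℝ) + s * p)) :=
    lintegral_congr fun x => lintegral_congr fun y => by rw [abs_sub_comm, dist_comm]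
  rw [hsymm, wspNorm]
  gcongr
  exact le_add_self

theorem MemWsp.wspNorm_lt_top {n : ℕ} {s p : ℝ} {u : EuclideanSpace ℝ (Fin n) → ℝ}
    (hu : MemWsp n s p u) (hp : 0 < p) : wspNorm n s p u < ∞ := by
  have hLp := lintegral_rpow_enorm_lt_top_of_eLpNorm_lt_top (ENNReal.ofReal_pos.2 hp).ne'
    ENNReal.ofReal_ne_top hu.1.2
  simp_rw [ENNReal.toReal_ofReal hp.le, Real.enorm_eq_ofReal_abs,
    ENNReal.ofReal_rpow_of_nonneg (abs_nonneg _) hp.le] at hLp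
  exact ENNReal.rpow_lt_top_of_nonneg (by positivity) (ENNReal.add_lt_top.2 ⟨hLp, hu.2⟩).ne

theorem gFun_le_gagliardo_general (n : ℕ) (s p γ : ℝ)
    (hs0 : 0 < s) (hp0 : 0 < p) (hp1 : p < 1)
    (hγ0 : 0 < γ) (hγ : γ ≤ 1/2)
    (u : EuclideanSpace ℝ (Fin n) → ℝ) (humeas : Measurable u) (hu : MemWsp n s p u) :
    ∃ C : ℝ≥0∞, 0 < C ∧ C < ∞ ∧
      (∀ᵐ x ∂(volume : Measure (EuclideanSpace ℝ (Fin n))),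
        gFun n s p γ u x ≤
          C * (∫⁻ z, ENNReal.ofReal (|u z - u x| ^ p / dist z x ^ ((n : ℝ) + s * p))) ^ (1 / p)) ∧
      (∫⁻ x, (gFun n s p γ u x) ^ p) ^ (1 / p) ≤ C * wspNorm n s p u ∧
      wspNorm n s p u < ∞ := by
  set K := (1 + (ENNReal.ofReal γ)⁻¹) / volume (ball (0 : EuclideanSpace ℝ (Fin n)) 1)
  have hK0 : K ≠ 0 := ENNReal.div_ne_zero.2 ⟨by simp, measure_ball_lt_top.ne⟩
  have hKtop : K ≠ ∞ := ENNReal.div_ne_top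
    (ENNReal.add_ne_top.2 ⟨ENNReal.one_ne_top, ENNReal.inv_ne_top.2 (by simpa using hγ0)⟩)
    (measure_ball_pos _ _ one_pos).ne'
  have hCtop : K ^ (1 / p) < ∞ := ENNReal.rpow_lt_top_of_nonneg (by positivity) hKtop
  have hpt : ∀ x, gFun n s p γ u x ≤ K ^ (1 / p) * gagliardoDensity n s p u x ^ (1 / p) :=
    gFun_le_mul_gagliardoDensity_rpow humeas hs0.le hp0 hp1.le hγ0 hγ
  refine ⟨K ^ (1 / p), ENNReal.rpow_pos (pos_iff_ne_zero.2 hK0) hKtop, hCtop,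
    ae_of_all _ hpt, ?_, hu.wspNorm_lt_top hp0⟩
  calc (∫⁻ x, gFun n s p γ u x ^ p) ^ (1 / p)
      ≤ K ^ (1 / p) * (∫⁻ x, gagliardoDensity n s p u x) ^ (1 / p) :=
        lintegral_rpow_rpow_le_of_le_mul_rpow hp0 hCtop.ne (ae_of_all _ hpt)
    _ ≤ K ^ (1 / p) * wspNorm n s p u := by
        gcongr
        exact lintegral_gagliardoDensity_rpow_le_wspNorm hp0.le u

/-- `g(x) ≲ (∫ |u(z)-u(x)|^p/|z-x|^{n+sp} dz)^{1/p}` a.e., and consequently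
`‖g‖_{L^p} ≲ ‖u‖_{W^{s,p}} < ∞`. -/
theorem gFun_le_gagliardo (n : ℕ) (s p γ : ℝ)
    (hs0 : 0 < s) (hs1 : s < 1) (hp0 : 0 < p) (hp1 : p < 1)
    (hγ0 : 0 < γ) (hγ : γ ≤ 1/2)
    (u : EuclideanSpace ℝ (Fin n) → ℝ) (humeas : Measurable u) (hu : MemWsp n s p u) :
    ∃ C : ℝ≥0∞, 0 < C ∧ C < ∞ ∧
      (∀ᵐ x ∂(volume : Measure (EuclideanSpace ℝ (Fin n))),
        gFun n s p γ u x ≤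
          C * (∫⁻ z, ENNReal.ofReal (|u z - u x| ^ p / dist z x ^ ((n : ℝ) + s * p))) ^ (1 / p)) ∧
      (∫⁻ x, (gFun n s p γ u x) ^ p) ^ (1 / p) ≤ C * wspNorm n s p u ∧
      wspNorm n s p u < ∞ :=
  gFun_le_gagliardo_general n s p γ hs0 hp0 hp1 hγ0 hγ u humeas hu
end
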